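/- arXiv:2305.00569 — 9 statements merged into one kernel-verified Lean document; each statement's English description precedes it below -/
import Mathlib

section
/- Let F be a facet of the d-dimensional crosspolytope K^d and let v be a vertex of F. If a homothetic copy K₁ = λK^d + u of K^d with ratio 0 < λ < 1 contains v, then the intersection F ∩ K₁ is contained in the image of F under the homothety with center v and ratio λ. -/
open scoped BigOperators

/-- The `d`-dimensional crosspolytope: the unit ball of the ℓ¹-norm on ℝ^d. -/
def cross (d : ℕ) : Set (Fin d → ℝ) := {x | ∑ i, |x i| ≤ 1}

/-- The homCopy `λ • (cross d) + u` of the scaled crosspolytope. -/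
def homCopy (d : ℕ) (lam : ℝ) (u : Fin d → ℝ) : Set (Fin d → ℝ) :=
  (fun x => lam • x + u) '' cross d

/-- `cross d` can be covered by `m` translates of `lam • cross d`. -/
def Covers (d m : ℕ) (lam : ℝ) : Prop :=
  ∃ u : Fin m → (Fin d → ℝ), cross d ⊆ ⋃ i, homCopy d lam (u i)

/-- The vertices `±e₁, …, ±e_d` of the crosspolytope. -/
def crossVertices (d : ℕ) : Set (Fin d → ℝ) :=
  {v | ∃ i : Fin d, v = Pi.single i (1 : ℝ) ∨ v = -Pi.single i (1 : ℝ)}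

/-- The facet centers `(ε₁/d, …, ε_d/d)`, `ε ∈ {−1,1}^d`, of the crosspolytope. -/
def facetCenters (d : ℕ) : Set (Fin d → ℝ) :=
  {c | ∃ ε : Fin d → ℝ, (∀ i, ε i = 1 ∨ ε i = -1) ∧ c = fun i => ε i / d}

theorem stmt_3 (d : ℕ) (hd : 2 ≤ d) (ε : Fin d → ℝ)
    (hε : ∀ i, ε i = 1 ∨ ε i = -1) (i : Fin d)
    (lam : ℝ) (h0 : 0 < lam) (h1 : lam < 1) (u : Fin d → ℝ)
    (hv : Pi.single i (ε i) ∈ homCopy d lam u) :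
    ({x ∈ cross d | ∑ j, ε j * x j = 1} ∩ homCopy d lam u) ⊆
      (fun x => Pi.single i (ε i) + lam • (x - Pi.single i (ε i))) ''
        {x ∈ cross d | ∑ j, ε j * x j = 1} := by
  obtain ⟨w, hw, hwv⟩ := hv
  set v : Fin d → ℝ := Pi.single i (ε i) with hvdef
  rintro x ⟨⟨hx1, hxF⟩, z, hz, hzx⟩
  have hx1' : ∑ j, |x j| ≤ 1 := hx1
  have hw' : ∑ j, |w j| ≤ 1 := hw
  have hz' : ∑ j, |z j| ≤ 1 := hz
  have hεabs : ∀ j, |ε j| = 1 := fun j => by rcases hε j with h | h <;> simp [h]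
  have hεsq : ε i * ε i = 1 := by rcases hε i with h | h <;> simp [h] <;> ring
  -- Fact A : ε j * x j = |x j| for all j
  have hA : ∀ j, ε j * x j = |x j| := by
    by_contra hc
    push_neg at hc
    obtain ⟨j, hj⟩ := hc
    have hle : ∀ k, ε k * x k ≤ |x k| := fun k =>
      calc ε k * x k ≤ |ε k * x k| := le_abs_self _
        _ = |x k| := by rw [abs_mul, hεabs, one_mul]
    have hlt : ε j * x j < |x j| := lt_of_le_of_ne (hle j) hj
    have : (1:ℝ) < ∑ k, |x k| := by
      calc (1:ℝ) = ∑ k, ε k * x k := hxF.symm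
        _ < ∑ k, |x k| := Finset.sum_lt_sum (fun k _ => hle k) ⟨j, Finset.mem_univ j, hlt⟩
    linarith
  have hsumx : ∑ j, |x j| = 1 := by
    rw [← hxF]; exact Finset.sum_congr rfl (fun j _ => (hA j).symm)
  -- distances
  have hxu : ∀ j, x j - u j = lam * z j := by
    intro j
    have := congrFun hzx j
    simp [Pi.smul_apply] at this
    linarith [this]
  have hvu : ∀ j, v j - u j = lam * w j := by
    intro j
    have := congrFun hwv j
    simp [Pi.smul_apply] at this
    linarith [this]
  have hA1 : ∑ j, |x j - u j| ≤ lam := by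
    calc ∑ j, |x j - u j| = ∑ j, lam * |z j| := by
          refine Finset.sum_congr rfl fun j _ => ?_
          rw [hxu j, abs_mul, abs_of_pos h0]
      _ = lam * ∑ j, |z j| := by rw [Finset.mul_sum]
      _ ≤ lam * 1 := by nlinarith
      _ = lam := mul_one lam
  have hB1 : ∑ j, |v j - u j| ≤ lam := by
    calc ∑ j, |v j - u j| = ∑ j, lam * |w j| := by
          refine Finset.sum_congr rfl fun j _ => ?_
          rw [hvu j, abs_mul, abs_of_pos h0]
      _ = lam * ∑ j, |w j| := by rw [Finset.mul_sum]
      _ ≤ lam * 1 := by nlinarith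
      _ = lam := mul_one lam
  -- split sums at i
  have hsplitx : |x i - u i| + ∑ j ∈ Finset.univ.erase i, |x j - u j| = ∑ j, |x j - u j| :=
    Finset.add_sum_erase _ (fun j => |x j - u j|) (Finset.mem_univ i)
  have hsplitv : |v i - u i| + ∑ j ∈ Finset.univ.erase i, |v j - u j| = ∑ j, |v j - u j| :=
    Finset.add_sum_erase _ (fun j => |v j - u j|) (Finset.mem_univ i)
  have hsplitabs : |x i| + ∑ j ∈ Finset.univ.erase i, |x j| = ∑ j, |x j| :=
    Finset.add_sum_erase _ (fun j => |x j|) (Finset.mem_univ i)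
  have hvj : ∀ j ∈ Finset.univ.erase i, v j = 0 := by
    intro j hj
    exact Pi.single_eq_of_ne (Finset.ne_of_mem_erase hj) _
  have hS : ∑ j ∈ Finset.univ.erase i, |x j| ≤
      ∑ j ∈ Finset.univ.erase i, |x j - u j| + ∑ j ∈ Finset.univ.erase i, |v j - u j| := by
    rw [← Finset.sum_add_distrib]
    refine Finset.sum_le_sum fun j hj => ?_
    rw [hvj j hj]
    calc |x j| = |(x j - u j) + (0 - u j) * (-1)| := by ring_nf
      _ ≤ |x j - u j| + |(0 - u j) * (-1)| := abs_add_le _ _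
      _ = |x j - u j| + |0 - u j| := by rw [abs_mul]; simp
  have hvi : v i = ε i := by rw [hvdef]; simp
  have htri : |x i - v i| ≤ |x i - u i| + |v i - u i| := by
    calc |x i - v i| = |(x i - u i) - (v i - u i)| := by ring_nf
      _ ≤ |x i - u i| + |v i - u i| := abs_sub _ _
  have hxi_le : ε i * x i ≤ 1 := by
    rw [hA i]; linarith [abs_nonneg (x i), hsplitabs,
      Finset.sum_nonneg (fun j (_ : j ∈ Finset.univ.erase i) => abs_nonneg (x j))]
  have habs_xi : |x i - v i| = 1 - ε i * x i := by
    rw [hvi]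
    have : |x i - ε i| = |ε i * (x i - ε i)| := by
      rw [abs_mul, hεabs, one_mul]
    rw [this]
    have : ε i * (x i - ε i) = ε i * x i - 1 := by rw [mul_sub, hεsq]
    rw [this, abs_sub_comm, abs_of_nonneg (by linarith)]
  have hSval : ∑ j ∈ Finset.univ.erase i, |x j| = 1 - ε i * x i := by
    rw [hA i] at *
    linarith [hsplitabs, hsumx]
  have hkey : 1 - lam ≤ ε i * x i := by
    have h2 : 1 - ε i * x i + (1 - ε i * x i) ≤ lam + lam := by
      calc (1 - ε i * x i) + (1 - ε i * x i)
          = ∑ j ∈ Finset.univ.erase i, |x j| + |x i - v i| := by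
            rw [hSval, habs_xi]
        _ ≤ (∑ j ∈ Finset.univ.erase i, |x j - u j| + ∑ j ∈ Finset.univ.erase i, |v j - u j|)
            + (|x i - u i| + |v i - u i|) := add_le_add hS htri
        _ = ∑ j, |x j - u j| + ∑ j, |v j - u j| := by linarith [hsplitx, hsplitv]
        _ ≤ lam + lam := add_le_add hA1 hB1
    linarith
  -- construct preimage point
  set y : Fin d → ℝ := fun j => v j + lam⁻¹ * (x j - v j) with hydef
  have hεy : ∀ j, 0 ≤ ε j * y j := by
    intro j
    by_cases hji : j = i
    · subst hji
      have hy : y j = ε j + lam⁻¹ * (x j - ε j) := by simp only [hydef, hvi]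
      have : ε j * y j = 1 + lam⁻¹ * (ε j * x j - 1) := by
        calc ε j * y j = ε j * ε j + lam⁻¹ * (ε j * x j - ε j * ε j) := by rw [hy]; ring
          _ = 1 + lam⁻¹ * (ε j * x j - 1) := by rw [hεsq]
      rw [this]
      have h2 : lam⁻¹ * (ε j * x j - 1) ≥ lam⁻¹ * (-lam) :=
        mul_le_mul_of_nonneg_left (by linarith) (le_of_lt (inv_pos.mpr h0))
      have h3 : lam⁻¹ * (-lam) = -1 := by field_simp
      linarith
    · have hvj0 : v j = 0 := Pi.single_eq_of_ne hji _
      have : ε j * y j = lam⁻¹ * |x j| := by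
        simp only [hydef, hvj0]
        rw [← hA j]; ring
      rw [this]
      positivity
  have hsumεy : ∑ j, ε j * y j = 1 := by
    have hεv : ∑ j, ε j * v j = 1 := by
      rw [show (1:ℝ) = ε i * v i by rw [hvi, hεsq]]
      refine Finset.sum_eq_single_of_mem i (Finset.mem_univ i) fun j _ hj => ?_
      have hvj0 : v j = 0 := by rw [hvdef]; exact Pi.single_eq_of_ne hj _
      rw [hvj0]; ring
    have : ∑ j, ε j * y j = ∑ j, (ε j * v j + lam⁻¹ * (ε j * x j - ε j * v j)) := by
      refine Finset.sum_congr rfl fun j _ => ?_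
      simp only [hydef]; ring
    rw [this, Finset.sum_add_distrib, ← Finset.mul_sum, Finset.sum_sub_distrib, hεv, hxF]
    ring
  have hycross : y ∈ cross d := by
    show ∑ j, |y j| ≤ 1
    have : ∑ j, |y j| = ∑ j, ε j * y j := by
      refine Finset.sum_congr rfl fun j _ => ?_
      rw [← abs_of_nonneg (hεy j), abs_mul, hεabs, one_mul]
    rw [this, hsumεy]
  refine ⟨y, ⟨hycross, hsumεy⟩, ?_⟩
  funext j
  show v j + lam * (y j - v j) = x j
  have hyj : y j - v j = lam⁻¹ * (x j - v j) := by simp [hydef]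
  rw [hyj, ← mul_assoc, mul_inv_cancel₀ h0.ne', one_mul]
  ring
end

section
/- For every integer d ≥ 2 and m = 2d, the covering functional of the d-dimensional crosspolytope satisfies γ_{2d}^d(K^d) = (d−1)/d; that is, K^d can be covered by 2d translates of ((d−1)/d)K^d, but for any μ < (d−1)/d, K^d cannot be covered by 2d translates of μK^d. -/
open scoped BigOperators

lemma mem_homCopy {d : ℕ} {lam : ℝ} (hlam : 0 < lam) (u x : Fin d → ℝ) :
    x ∈ homCopy d lam u ↔ ∑ i, |x i - u i| ≤ lam := by
  constructor
  · rintro ⟨y, hy, rfl⟩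
    have : ∀ i, |(lam • y + u) i - u i| = lam * |y i| := by
      intro i
      simp [Pi.smul_apply, abs_mul, abs_of_pos hlam]
    rw [Finset.sum_congr rfl fun i _ => this i, ← Finset.mul_sum]
    calc lam * ∑ i, |y i| ≤ lam * 1 := mul_le_mul_of_nonneg_left hy hlam.le
      _ = lam := mul_one lam
  · intro h
    refine ⟨lam⁻¹ • (x - u), ?_, ?_⟩
    · have : ∀ i, |(lam⁻¹ • (x - u)) i| = lam⁻¹ * |x i - u i| := by
        intro i
        simp [abs_mul, abs_of_pos (inv_pos.mpr hlam)]
      show ∑ i, |(lam⁻¹ • (x - u)) i| ≤ 1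
      rw [Finset.sum_congr rfl fun i _ => this i, ← Finset.mul_sum]
      calc lam⁻¹ * ∑ i, |x i - u i| ≤ lam⁻¹ * lam :=
            mul_le_mul_of_nonneg_left h (inv_pos.mpr hlam).le
        _ = 1 := inv_mul_cancel₀ hlam.ne'
    · simp [smul_smul, mul_inv_cancel₀ hlam.ne']

lemma sum_ite_const {d : ℕ} (i : Fin d) (A B : ℝ) :
    ∑ j, (if j = i then A else B) = (d : ℝ) * B + (A - B) := by
  have h : ∀ j : Fin d, (if j = i then A else B) = B + (if j = i then A - B else 0) := by
    intro j; by_cases hj : j = i <;> simp [hj]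
  rw [Finset.sum_congr rfl fun j _ => h j, Finset.sum_add_distrib]
  simp [Finset.sum_ite_eq', mul_comm]

lemma cover_key {d : ℕ} (hd : 2 ≤ d) (x : Fin d → ℝ) (hx : ∑ j, |x j| ≤ 1)
    (i : Fin d) (hmax : ∀ j, |x j| ≤ |x i|) :
    ∑ j, |x j - (if j = i then (if 0 ≤ x i then (1:ℝ) else -1)/d else 0)| ≤ ((d:ℝ)-1)/d := by
  have hdR : (2:ℝ) ≤ d := by exact_mod_cast hd
  have hdpos : (0:ℝ) < d := by linarith
  set s : ℝ := if 0 ≤ x i then (1:ℝ) else -1 with hs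
  have habs : |x i - s/d| = abs (|x i| - 1/d) := by
    by_cases h : 0 ≤ x i
    · rw [hs, if_pos h, abs_of_nonneg h]
    · push_neg at h
      rw [hs, if_neg (not_le.mpr h), abs_of_neg h,
        show x i - (-1)/d = -((-x i) - 1/d) by ring, abs_neg]
  have hsum : ∑ j, |x j - (if j = i then s/d else 0)| = (∑ j, |x j|) + (|x i - s/d| - |x i|) := by
    have h : ∀ j, |x j - (if j = i then s/d else 0)| =
        |x j| + (if j = i then |x i - s/d| - |x i| else 0) := by
      intro j; by_cases hj : j = i <;> simp [hj]
    rw [Finset.sum_congr rfl fun j _ => h j, Finset.sum_add_distrib]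
    simp [Finset.sum_ite_eq']
  rw [hsum]
  set S := ∑ j, |x j| with hS
  set a := |x i| with ha
  have haS : a ≤ S := Finset.single_le_sum (f := fun j => |x j|) (fun j _ => abs_nonneg (x j)) (Finset.mem_univ i)
  have hSa : S ≤ (d:ℝ) * a := by
    calc S ≤ ∑ _j : Fin d, a := Finset.sum_le_sum fun j _ => hmax j
      _ = (d:ℝ) * a := by simp [mul_comm]
  rw [habs]
  by_cases hcase : 1/(d:ℝ) ≤ a
  · rw [abs_of_nonneg (by linarith)]
    have : ((d:ℝ)-1)/d = 1 - 1/d := by field_simp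
    linarith
  · push_neg at hcase
    rw [abs_of_neg (by linarith)]
    have h1 : ((d:ℝ)-1)/d = 1 - 1/d := by field_simp
    have h2 : ((d:ℝ)-2) * a ≤ ((d:ℝ)-2) * (1/d) :=
      mul_le_mul_of_nonneg_left hcase.le (by linarith)
    have h3 : ((d:ℝ)-2) * (1/d) = 1 - 2/d := by field_simp
    have h4 : (2:ℝ)/d = 2*(1/d) := by ring
    linarith [h2, hSa]

lemma covers_upper {d : ℕ} (hd : 2 ≤ d) : Covers d (2*d) (((d:ℝ)-1)/d) := by
  have hd0 : 0 < d := by omega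
  have hdR : (2:ℝ) ≤ d := by exact_mod_cast hd
  have hlam : 0 < ((d:ℝ)-1)/d := by
    apply div_pos <;> linarith
  refine ⟨fun k => fun j =>
      if j = (⟨(k:ℕ) % d, Nat.mod_lt _ hd0⟩ : Fin d) then (if (k:ℕ) < d then (1:ℝ) else -1)/d
      else 0, ?_⟩
  intro x hx
  obtain ⟨i, -, hmax⟩ := Finset.exists_max_image Finset.univ (fun j => |x j|)
    ⟨⟨0, hd0⟩, Finset.mem_univ _⟩
  have hi := i.isLt
  by_cases hpos : 0 ≤ x i
  · refine Set.mem_iUnion.mpr ⟨⟨i.val, by omega⟩, (mem_homCopy hlam _ x).mpr ?_⟩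
    have h1 : (⟨(i.val : ℕ) % d, Nat.mod_lt _ hd0⟩ : Fin d) = i :=
      Fin.ext (Nat.mod_eq_of_lt hi)
    have h2 : ((i.val : ℕ) < d) = True := by simp [hi]
    simp only [h1, h2, if_true]
    have := cover_key hd x hx i (fun j => hmax j (Finset.mem_univ j))
    rwa [if_pos hpos] at this
  · refine Set.mem_iUnion.mpr ⟨⟨i.val + d, by omega⟩, (mem_homCopy hlam _ x).mpr ?_⟩
    have h1 : (⟨((i.val + d : ℕ)) % d, Nat.mod_lt _ hd0⟩ : Fin d) = i :=
      Fin.ext (by simp [Nat.add_mod_right, Nat.mod_eq_of_lt hi])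
    have h2 : ((i.val + d : ℕ) < d) = False := by simp
    simp only [h1, h2, if_false]
    have := cover_key hd x hx i (fun j => hmax j (Finset.mem_univ j))
    rwa [if_neg hpos] at this

lemma not_covers {d : ℕ} (hd : 2 ≤ d) (μ : ℝ) (hμ0 : 0 < μ)
    (hμ : μ < ((d:ℝ)-1)/d) : ¬ Covers d (2*d) μ := by
  rintro ⟨u, hu⟩
  have hd0 : 0 < d := by omega
  have hdR : (2:ℝ) ≤ d := by exact_mod_cast hd
  have hdpos : (0:ℝ) < d := by linarith
  set V : Fin d × Bool → (Fin d → ℝ) :=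
    fun p j => if j = p.1 then (if p.2 then 1 else -1) else 0 with hV
  have hVmem : ∀ p, V p ∈ cross d := by
    intro p
    show ∑ j, |V p j| ≤ 1
    have h : ∀ j, |V p j| = if j = p.1 then (1:ℝ) else 0 := by
      intro j; by_cases hj : j = p.1 <;> cases hb : p.2 <;> simp [hV, hj, hb]
    rw [Finset.sum_congr rfl fun j _ => h j, sum_ite_const]
    linarith
  choose f hf using fun p => Set.mem_iUnion.mp (hu (hVmem p))
  have dist2 : ∀ (x y : Fin d → ℝ) (i : Fin (2*d)), x ∈ homCopy d μ (u i) →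
      y ∈ homCopy d μ (u i) → ∑ j, |x j - y j| ≤ 2*μ := by
    intro x y i hx hy
    have hx' := (mem_homCopy hμ0 _ x).mp hx
    have hy' := (mem_homCopy hμ0 _ y).mp hy
    calc ∑ j, |x j - y j| ≤ ∑ j, (|x j - u i j| + |y j - u i j|) := by
          apply Finset.sum_le_sum; intro j _
          calc |x j - y j| ≤ |x j - u i j| + |u i j - y j| := abs_sub_le _ _ _
            _ = |x j - u i j| + |y j - u i j| := by rw [abs_sub_comm (u i j)]
      _ = (∑ j, |x j - u i j|) + ∑ j, |y j - u i j| := Finset.sum_add_distrib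
      _ ≤ μ + μ := add_le_add hx' hy'
      _ = 2*μ := by ring
  have h2μ : 2*μ < 2 := by
    have : ((d:ℝ)-1)/d < 1 := by rw [div_lt_one hdpos]; linarith
    linarith
  have hinj : Function.Injective f := by
    intro p q hpq
    by_contra hne
    have hle := dist2 (V p) (V q) (f p) (hf p) (by rw [hpq]; exact hf q)
    have h2 : (2:ℝ) ≤ ∑ j, |V p j - V q j| := by
      rcases p with ⟨i, b⟩; rcases q with ⟨i', b'⟩
      by_cases hii : i = i'
      · subst hii
        have hbb : b ≠ b' := by
          intro h; exact hne (by rw [h])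
        have hval : |V (i,b) i - V (i,b') i| = 2 := by
          cases b <;> cases b'
          · exact absurd rfl hbb
          · norm_num [hV]
          · norm_num [hV]
          · exact absurd rfl hbb
        calc (2:ℝ) = |V (i,b) i - V (i,b') i| := hval.symm
          _ ≤ ∑ j, |V (i,b) j - V (i,b') j| :=
            Finset.single_le_sum (f := fun j => |V (i,b) j - V (i,b') j|)
              (fun j _ => abs_nonneg _) (Finset.mem_univ i)
      · have hmono := Finset.sum_le_sum_of_subset_of_nonneg
          (Finset.subset_univ ({i, i'} : Finset (Fin d)))
          (fun j _ _ => abs_nonneg (V (i,b) j - V (i',b') j))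
        have hpair : ∑ j ∈ ({i,i'} : Finset (Fin d)), |V (i,b) j - V (i',b') j| = 2 := by
          rw [Finset.sum_pair hii]
          cases b <;> cases b' <;> simp [hV, hii, Ne.symm hii] <;> norm_num
        linarith
    linarith
  have hsurj : Function.Surjective f := by
    have hcard : Fintype.card (Fin d × Bool) = Fintype.card (Fin (2*d)) := by
      simp [Fintype.card_prod]; ring
    exact ((Fintype.bijective_iff_injective_and_card f).mpr ⟨hinj, hcard⟩).2
  set c : Fin d → ℝ := fun _ => 1/d with hc
  have hcm : c ∈ cross d := by
    show ∑ j, |c j| ≤ 1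
    have h : ∀ j : Fin d, |c j| = 1/(d:ℝ) := by
      intro j; simp [hc, abs_of_nonneg (by positivity : (0:ℝ) ≤ 1/(d:ℝ))]
    rw [Finset.sum_congr rfl fun j _ => h j, Finset.sum_const, Finset.card_univ,
      Fintype.card_fin, nsmul_eq_mul, mul_one_div, div_le_one hdpos]
  obtain ⟨k, hk⟩ := Set.mem_iUnion.mp (hu hcm)
  obtain ⟨p, rfl⟩ := hsurj k
  have hle := dist2 (V p) c (f p) (hf p) hk
  have hge : 2*(((d:ℝ)-1)/d) ≤ ∑ j, |V p j - c j| := by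
    have hterm : ∀ j, (if j = p.1 then ((d:ℝ)-1)/d else 1/d) ≤ |V p j - c j| := by
      intro j; by_cases hj : j = p.1
      · subst hj
        have hd1 : ((d:ℝ)-1)/d = 1 - 1/d := by field_simp
        have hdi : (0:ℝ) < 1/d := by positivity
        have hdi1 : (1:ℝ)/d ≤ 1 := by rw [div_le_one hdpos]; linarith
        cases hb : p.2 <;> simp only [hV, hc, hb, eq_self_iff_true, if_true]
        · rw [show (if (false:Bool) = true then (1:ℝ) else -1) = -1 by norm_num,
            show (-1:ℝ) - 1/(d:ℝ) = -(1 + 1/d) by ring, abs_neg,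
            abs_of_nonneg (by linarith)]
          linarith
        · rw [abs_of_nonneg (by linarith)]
          linarith
      · simp only [hV, hc, if_neg hj]
        rw [show (0:ℝ) - 1/(d:ℝ) = -(1/d) by ring, abs_neg,
          abs_of_nonneg (by positivity)]
    calc 2*(((d:ℝ)-1)/d) = ∑ j, (if j = p.1 then ((d:ℝ)-1)/d else 1/d) := by
          rw [sum_ite_const]; field_simp; ring
      _ ≤ _ := Finset.sum_le_sum fun j _ => hterm j
  have hfin : 2*(((d:ℝ)-1)/d) ≤ 2*μ := le_trans hge hle
  linarith

theorem stmt_5 (d : ℕ) (hd : 2 ≤ d) :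
    Covers d (2 * d) (((d : ℝ) - 1) / d) ∧
    ∀ μ : ℝ, 0 < μ → μ < ((d : ℝ) - 1) / d → ¬ Covers d (2 * d) μ :=
  ⟨covers_upper hd, fun μ hμ0 hμ => not_covers hd μ hμ0 hμ⟩
end

section
/- For every integer d ≥ 4, the d-dimensional crosspolytope K^d can be covered by 2d translates of its interior; in particular c^d(K^d) ≤ 2d < 2^d, so Hadwiger's covering conjecture holds for K^d. -/
open scoped BigOperators

/-- The translate vectors `±(1/d)eⱼ`, indexed by `Fin (2*d)`. -/
noncomputable def tvec (d : ℕ) (i : Fin (2 * d)) : Fin d → ℝ :=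
  fun k => if (i : ℕ) % d = (k : ℕ) then (if (i : ℕ) < d then (1:ℝ)/d else -((1:ℝ)/d)) else 0

lemma tvec_pos (d : ℕ) (j : Fin d) (h2 : (j : ℕ) < 2 * d) :
    tvec d ⟨(j : ℕ), h2⟩ = fun k => if j = k then (1:ℝ)/d else 0 := by
  funext k
  simp only [tvec, Nat.mod_eq_of_lt j.isLt, j.isLt, if_true, Fin.val_inj]

lemma tvec_neg (d : ℕ) (j : Fin d) (h2 : (j : ℕ) + d < 2 * d) :
    tvec d ⟨(j : ℕ) + d, h2⟩ = fun k => if j = k then -((1:ℝ)/d) else 0 := by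
  funext k
  have hmod : ((j : ℕ) + d) % d = (j : ℕ) := by
    rw [Nat.add_mod_right]; exact Nat.mod_eq_of_lt j.isLt
  simp only [tvec, hmod, Fin.val_inj, if_neg (show ¬((j:ℕ) + d < d) by omega)]

lemma open_subset_interior (d : ℕ) :
    {x : Fin d → ℝ | ∑ i, |x i| < 1} ⊆ interior (cross d) := by
  apply interior_maximal
  · intro x hx
    show ∑ i, |x i| ≤ 1
    exact le_of_lt hx
  · have hc : Continuous fun x : Fin d → ℝ => ∑ i, |x i| :=
      continuous_finset_sum _ fun i _ => (continuous_apply i).abs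
    exact isOpen_lt hc continuous_const

lemma arith (d : ℕ) (hd : 2 ≤ d) (M a : ℝ) (hM : M ≤ 1) (hM0 : 0 ≤ M) (ha : 0 ≤ a)
    (haM : M ≤ d * a) : M - a + |a - 1/d| < 1 := by
  have hd' : (2:ℝ) ≤ d := by exact_mod_cast hd
  have hdpos : (0:ℝ) < d := by linarith
  have h1 : (1:ℝ)/d * d = 1 := by field_simp
  rcases le_total a (1/d) with h | h
  · rw [abs_of_nonpos (by linarith)]
    nlinarith [mul_le_mul_of_nonneg_left hM (show (0:ℝ) ≤ d - 2 by linarith)]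
  · rw [abs_of_nonneg (by linarith)]
    have h0 : (0:ℝ) < 1/d := by positivity
    linarith

lemma sum_split (d : ℕ) (x : Fin d → ℝ) (j : Fin d) (c : ℝ) :
    ∑ k, |x k - (if j = k then c else 0)| = (∑ k, |x k|) - |x j| + |x j - c| := by
  have h1 := Finset.sum_erase_add Finset.univ
    (fun k => |x k - (if j = k then c else 0)|) (Finset.mem_univ j)
  have h2 := Finset.sum_erase_add Finset.univ (fun k => |x k|) (Finset.mem_univ j)
  have h3 : ∑ k ∈ Finset.univ.erase j, |x k - (if j = k then c else 0)|
      = ∑ k ∈ Finset.univ.erase j, |x k| := by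
    refine Finset.sum_congr rfl fun k hk => ?_
    rw [if_neg (Ne.symm (Finset.ne_of_mem_erase hk)), sub_zero]
  simp only [eq_self_iff_true, if_true] at h1
  linarith

lemma two_mul_lt (d : ℕ) (hd : 4 ≤ d) : 2 * d < 2 ^ d := by
  induction d, hd using Nat.le_induction with
  | base => norm_num
  | succ n hn ih =>
    have h2 : 2 ≤ 2 ^ n := Nat.one_lt_two_pow (by omega)
    rw [pow_succ]
    omega

theorem stmt_6 (d : ℕ) (hd : 4 ≤ d) :
    (∃ u : Fin (2 * d) → (Fin d → ℝ),
      cross d ⊆ ⋃ i, (fun x => x + u i) '' interior (cross d)) ∧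
    2 * d < 2 ^ d := by
  refine ⟨⟨tvec d, ?_⟩, two_mul_lt d hd⟩
  intro x hx
  simp only [cross, Set.mem_setOf_eq] at hx
  obtain ⟨j, -, hj⟩ := Finset.exists_max_image Finset.univ (fun i => |x i|)
    ⟨⟨0, by omega⟩, Finset.mem_univ _⟩
  have hja : ∀ k, |x k| ≤ |x j| := fun k => hj k (Finset.mem_univ k)
  have haM : ∑ k, |x k| ≤ (d : ℝ) * |x j| := by
    calc ∑ k, |x k| ≤ Finset.univ.card • |x j| :=
          Finset.sum_le_card_nsmul _ _ _ fun k _ => hja k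
      _ = (d : ℝ) * |x j| := by simp [nsmul_eq_mul]
  have hM0 : 0 ≤ ∑ k, |x k| := Finset.sum_nonneg fun k _ => abs_nonneg _
  have key : (∑ k, |x k|) - |x j| + (|(|x j|) - 1/d|) < 1 :=
    arith d (by omega) _ _ hx hM0 (abs_nonneg _) haM
  rcases le_or_gt 0 (x j) with hs | hs
  · have h2 : (j : ℕ) < 2 * d := by omega
    refine Set.mem_iUnion.2 ⟨⟨(j : ℕ), h2⟩, ?_⟩
    rw [tvec_pos d j h2]
    refine ⟨x - fun k => if j = k then (1:ℝ)/d else 0, ?_, ?_⟩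
    · apply open_subset_interior
      simp only [Set.mem_setOf_eq, Pi.sub_apply]
      rw [sum_split]
      rwa [show |x j - 1/(d:ℝ)| = |(|x j|) - 1/d| by rw [abs_of_nonneg hs]]
    · simp
  · have h2 : (j : ℕ) + d < 2 * d := by omega
    refine Set.mem_iUnion.2 ⟨⟨(j : ℕ) + d, h2⟩, ?_⟩
    rw [tvec_neg d j h2]
    refine ⟨x - fun k => if j = k then -((1:ℝ)/d) else 0, ?_, ?_⟩
    · apply open_subset_interior
      simp only [Set.mem_setOf_eq, Pi.sub_apply]
      rw [sum_split]
      have he : |x j - -((1:ℝ)/d)| = |(|x j|) - 1/d| := by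
        rw [abs_of_neg hs, ← abs_neg]
        ring_nf
      rwa [he]
    · simp
end

section
/- For every integer d ≥ 4, the set S consisting of the 2d vertices ±e₁,…,±e_d of K^d together with the two facet centers (1/d,…,1/d) and (−1/d,…,−1/d) is a set of 2d + 2 points of K^d whose pairwise ℓ¹-distances are all at least 2(d−1)/d; consequently, for any μ < (d−1)/d, no translate of μK^d contains two distinct points of S. -/
open scoped BigOperators

/-- Auxiliary parametrization of the point set `S`. -/
noncomputable def pf (d : ℕ) : (Fin d × Bool) ⊕ Bool → (Fin d → ℝ)
  | .inl (i, true) => Pi.single i 1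
  | .inl (i, false) => Pi.single i (-1)
  | .inr true => fun _ => (1 : ℝ) / d
  | .inr false => fun _ => -((1 : ℝ) / d)

lemma sumSC (d : ℕ) [NeZero d] (i : Fin d) (a c : ℝ) :
    ∑ j, |(Pi.single i a : Fin d → ℝ) j - c| = |a - c| + ((d : ℝ) - 1) * |c| := by
  rw [← Finset.add_sum_erase _ _ (Finset.mem_univ i)]
  rw [Pi.single_eq_same]
  congr 1
  rw [Finset.sum_congr rfl (fun j hj => by
    rw [Pi.single_eq_of_ne (Finset.ne_of_mem_erase hj), zero_sub, abs_neg]),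
    Finset.sum_const, Finset.card_erase_of_mem (Finset.mem_univ i), Finset.card_univ,
    Fintype.card_fin, nsmul_eq_mul, Nat.cast_sub (Nat.one_le_iff_ne_zero.2 (NeZero.ne d))]
  simp

lemma sumSS_eq (d : ℕ) (i : Fin d) (a b : ℝ) :
    ∑ j, |(Pi.single i a : Fin d → ℝ) j - (Pi.single i b : Fin d → ℝ) j| = |a - b| := by
  rw [← Finset.add_sum_erase _ _ (Finset.mem_univ i), Pi.single_eq_same, Pi.single_eq_same]
  rw [Finset.sum_eq_zero (fun j hj => by
    rw [Pi.single_eq_of_ne (Finset.ne_of_mem_erase hj),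
      Pi.single_eq_of_ne (Finset.ne_of_mem_erase hj), sub_zero, abs_zero]), add_zero]

lemma sumSS_ne (d : ℕ) (i k : Fin d) (hik : i ≠ k) (a b : ℝ) :
    ∑ j, |(Pi.single i a : Fin d → ℝ) j - (Pi.single k b : Fin d → ℝ) j| = |a| + |b| := by
  rw [← Finset.add_sum_erase _ _ (Finset.mem_univ i), Pi.single_eq_same,
    Pi.single_eq_of_ne hik, sub_zero]
  congr 1
  have hk : k ∈ Finset.univ.erase i := Finset.mem_erase.2 ⟨hik.symm, Finset.mem_univ k⟩
  rw [← Finset.add_sum_erase _ _ hk, Pi.single_eq_same,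
    Pi.single_eq_of_ne hik.symm, zero_sub, abs_neg]
  rw [Finset.sum_eq_zero (fun j hj => by
    have hjk : j ≠ k := Finset.ne_of_mem_erase hj
    have hji : j ≠ i := Finset.ne_of_mem_erase (Finset.mem_of_mem_erase hj)
    rw [Pi.single_eq_of_ne hji, Pi.single_eq_of_ne hjk, sub_zero, abs_zero]), add_zero]

theorem stmt_8 (d : ℕ) (hd : 4 ≤ d)
    (S : Set (Fin d → ℝ))
    (hS : S = crossVertices d ∪
      {(fun _ => (1 : ℝ) / d), (fun _ => -((1 : ℝ) / d))}) :
    S.ncard = 2 * d + 2 ∧ S ⊆ cross d ∧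
    (∀ p ∈ S, ∀ q ∈ S, p ≠ q →
      2 * ((d : ℝ) - 1) / d ≤ ∑ i, |p i - q i|) ∧
    (∀ μ : ℝ, 0 < μ → μ < ((d : ℝ) - 1) / d →
      ∀ p ∈ S, ∀ q ∈ S, p ≠ q → ∀ u : Fin d → ℝ,
        ¬ (p ∈ homCopy d μ u ∧ q ∈ homCopy d μ u)) := by
  have hdz : NeZero d := ⟨by omega⟩
  set D : ℝ := (d : ℝ) with hDdef
  have h14 : (4 : ℝ) ≤ D := by rw [hDdef]; exact_mod_cast hd
  have hD0 : (0 : ℝ) < D := by linarith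
  have hD0' : D ≠ 0 := ne_of_gt hD0
  have hinv0 : (0 : ℝ) < 1 / D := by positivity
  have hinv1 : (1 : ℝ) / D ≤ 1 := by
    rw [div_le_one hD0]; linarith
  -- normal forms of elements of S
  have hform : ∀ p ∈ S,
      (∃ (i : Fin d) (a : ℝ), (a = 1 ∨ a = -1) ∧ p = Pi.single i a) ∨
      (∃ c : ℝ, (c = 1 / D ∨ c = -(1 / D)) ∧ p = fun _ => c) := by
    intro p hp
    rw [hS] at hp
    rcases hp with hp | hp
    · obtain ⟨i, h | h⟩ := hp
      · exact Or.inl ⟨i, 1, Or.inl rfl, h⟩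
      · exact Or.inl ⟨i, -1, Or.inr rfl, by rw [h, ← Pi.single_neg]⟩
    · simp only [Set.mem_insert_iff, Set.mem_singleton_iff] at hp
      rcases hp with rfl | rfl
      · exact Or.inr ⟨1 / D, Or.inl rfl, rfl⟩
      · exact Or.inr ⟨-(1 / D), Or.inr rfl, rfl⟩
  -- the single/const distance bound
  have bSC : ∀ (i : Fin d) (a c : ℝ), (a = 1 ∨ a = -1) → (c = 1 / D ∨ c = -(1 / D)) →
      2 * (D - 1) / D ≤ ∑ j, |(Pi.single i a : Fin d → ℝ) j - c| := by
    intro i a c ha hc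
    rw [sumSC d i a c, ← hDdef]
    rcases ha with rfl | rfl <;> rcases hc with rfl | rfl
    · rw [abs_of_nonneg (by linarith : (0:ℝ) ≤ 1 - 1/D), abs_of_nonneg hinv0.le]
      apply le_of_eq
      field_simp
      ring
    · rw [sub_neg_eq_add, abs_of_nonneg (by linarith : (0:ℝ) ≤ 1 + 1/D), abs_neg,
        abs_of_nonneg hinv0.le]
      have e : 1 + 1/D + (D - 1) * (1/D) = 2 := by field_simp; ring
      rw [e, div_le_iff₀ hD0]; linarith
    · rw [abs_of_nonpos (by linarith : (-1:ℝ) - 1/D ≤ 0), abs_of_nonneg hinv0.le]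
      have e : -(-1 - 1/D) + (D - 1) * (1/D) = 2 := by field_simp; ring
      rw [e, div_le_iff₀ hD0]; linarith
    · rw [sub_neg_eq_add, abs_of_nonpos (by linarith : (-1:ℝ) + 1/D ≤ 0), abs_neg,
        abs_of_nonneg hinv0.le]
      apply le_of_eq
      field_simp
      ring
  have hswap : ∀ p q : Fin d → ℝ, ∑ i, |p i - q i| = ∑ i, |q i - p i| :=
    fun p q => Finset.sum_congr rfl fun j _ => abs_sub_comm _ _
  -- part 3
  have key : ∀ p ∈ S, ∀ q ∈ S, p ≠ q → 2 * (D - 1) / D ≤ ∑ i, |p i - q i| := by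
    intro p hp q hq hpq
    rcases hform p hp with ⟨i, a, ha, rfl⟩ | ⟨c1, hc1, rfl⟩ <;>
      rcases hform q hq with ⟨k, b, hb, rfl⟩ | ⟨c2, hc2, rfl⟩
    · rcases eq_or_ne i k with rfl | hik
      · have hab : a ≠ b := fun h => hpq (by rw [h])
        rw [sumSS_eq]
        have h2 : |a - b| = 2 := by
          rcases ha with rfl | rfl <;> rcases hb with rfl | rfl <;>
            first | exact absurd rfl hab | norm_num
        rw [h2, div_le_iff₀ hD0]; linarith
      · rw [sumSS_ne d i k hik]
        have : |a| = 1 := by rcases ha with rfl | rfl <;> norm_num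
        have hb' : |b| = 1 := by rcases hb with rfl | rfl <;> norm_num
        rw [this, hb', div_le_iff₀ hD0]; linarith
    · exact bSC i a c2 ha hc2
    · rw [hswap]
      exact bSC k b c1 hb hc1
    · have hcc : c1 ≠ c2 := fun h => hpq (by rw [h])
      have hsum : ∑ j : Fin d, |c1 - c2| = D * |c1 - c2| := by
        rw [Finset.sum_const, Finset.card_univ, Fintype.card_fin, nsmul_eq_mul, hDdef]
      rw [hsum]
      have h2 : |c1 - c2| = 2 / D := by
        rcases hc1 with rfl | rfl <;> rcases hc2 with rfl | rfl <;>
          first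
          | (exact absurd rfl hcc)
          | (rw [sub_neg_eq_add, abs_of_nonneg (by linarith)]; ring)
          | (rw [abs_of_nonpos (by linarith)]; ring)
      rw [h2]
      have e : D * (2 / D) = 2 := by field_simp
      rw [e, div_le_iff₀ hD0]; linarith
  refine ⟨?_, ?_, fun p hp q hq hpq => key p hp q hq hpq, ?_⟩
  · -- cardinality
    have hrange : S = Set.range (pf d) := by
      ext p
      constructor
      · intro hp
        rw [hS] at hp
        rcases hp with hp | hp
        · obtain ⟨i, h | h⟩ := hp
          · exact ⟨.inl (i, true), h.symm⟩
          · exact ⟨.inl (i, false), by rw [h]; exact Pi.single_neg i 1⟩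
        · simp only [Set.mem_insert_iff, Set.mem_singleton_iff] at hp
          rcases hp with rfl | rfl
          · exact ⟨.inr true, rfl⟩
          · exact ⟨.inr false, rfl⟩
      · rintro ⟨x, rfl⟩
        rw [hS]
        rcases x with ⟨i, _ | _⟩ | _ | _
        · exact Or.inl ⟨i, Or.inr ((Pi.single_neg i 1 : (Pi.single i (-1) : Fin d → ℝ) = _))⟩
        · exact Or.inl ⟨i, Or.inl rfl⟩
        · exact Or.inr (Or.inr rfl)
        · exact Or.inr (Or.inl rfl)
    have hSS' : ∀ (i j : Fin d) (a b : ℝ), (Pi.single i a : Fin d → ℝ) = Pi.single j b →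
        a = 0 ∨ (i = j ∧ a = b) := by
      intro i j a b h
      rcases eq_or_ne i j with rfl | hij
      · right; exact ⟨rfl, by simpa using congrFun h i⟩
      · left
        have := congrFun h i
        rwa [Pi.single_eq_same, Pi.single_eq_of_ne hij] at this
    have hSC' : ∀ (i : Fin d) (a c : ℝ),
        (Pi.single i a : Fin d → ℝ) = (fun _ => c) → a = c := by
      intro i a c h
      simpa using congrFun h i
    have hinvlt : (1 : ℝ) / D < 1 := by
      rw [div_lt_one hD0]; linarith
    have hinj : Function.Injective (pf d) := by
      intro x y h
      rcases x with ⟨i, bi⟩ | bx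
      · rcases y with ⟨j, bj⟩ | by'
        · cases bi <;> cases bj <;> simp only [pf] at h
          · rcases hSS' _ _ _ _ h with h' | ⟨rfl, _⟩
            · norm_num at h'
            · rfl
          · rcases hSS' _ _ _ _ h with h' | ⟨rfl, h'⟩ <;> norm_num at h'
          · rcases hSS' _ _ _ _ h with h' | ⟨rfl, h'⟩ <;> norm_num at h'
          · rcases hSS' _ _ _ _ h with h' | ⟨rfl, _⟩
            · norm_num at h'
            · rfl
        · exfalso
          cases bi <;> cases by' <;> simp only [pf] at h <;>
            have h2 := hSC' _ _ _ h <;> linarith [hinvlt, hinv0, h2]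
      · rcases y with ⟨j, bj⟩ | by'
        · exfalso
          cases bx <;> cases bj <;> simp only [pf] at h <;>
            have h2 := hSC' _ _ _ h.symm <;> linarith [hinvlt, hinv0, h2]
        · cases bx <;> cases by' <;> simp only [pf] at h
          · rfl
          · exfalso
            have h2 : -((1:ℝ)/D) = 1/D := congrFun h ⟨0, by omega⟩
            linarith
          · exfalso
            have h2 : ((1:ℝ)/D) = -(1/D) := congrFun h ⟨0, by omega⟩
            linarith
          · rfl
    rw [hrange, ← Set.image_univ, Set.ncard_image_of_injective _ hinj, Set.ncard_univ]
    simp only [Nat.card_eq_fintype_card, Fintype.card_sum, Fintype.card_prod,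
      Fintype.card_fin, Fintype.card_bool]
    omega
  · -- S ⊆ cross d
    intro p hp
    have hsum1 : ∑ i, |p i| ≤ 1 := by
      rcases hform p hp with ⟨i, a, ha, rfl⟩ | ⟨c, hc, rfl⟩
      · have : ∑ j, |(Pi.single i a : Fin d → ℝ) j| = |a| := by
          simpa using sumSC d i a 0
        rw [this]
        rcases ha with rfl | rfl <;> norm_num
      · have : ∑ _j : Fin d, |c| = D * |c| := by
          rw [Finset.sum_const, Finset.card_univ, Fintype.card_fin, nsmul_eq_mul, hDdef]
        rw [this]
        have hcabs : |c| = 1 / D := by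
          rcases hc with rfl | rfl
          · exact abs_of_nonneg hinv0.le
          · rw [abs_neg]; exact abs_of_nonneg hinv0.le
        rw [hcabs]
        apply le_of_eq
        field_simp
    exact hsum1
  · -- part 4
    rintro μ hμ0 hμ p hp q hq hpq u ⟨⟨x, hx, hxe⟩, ⟨y, hy, hye⟩⟩
    have h3 := key p hp q hq hpq
    have hx1 : ∑ i, |x i| ≤ 1 := hx
    have hy1 : ∑ i, |y i| ≤ 1 := hy
    have e : ∀ i, p i - q i = μ * (x i - y i) := by
      intro i
      have hpi : p i = μ * x i + u i := by
        rw [← hxe]; simp [smul_eq_mul]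
      have hqi : q i = μ * y i + u i := by
        rw [← hye]; simp [smul_eq_mul]
      rw [hpi, hqi]; ring
    have hsum : ∑ i, |p i - q i| = μ * ∑ i, |x i - y i| := by
      rw [Finset.mul_sum]
      exact Finset.sum_congr rfl fun i _ => by
        rw [e i, abs_mul, abs_of_pos hμ0]
    have hT : ∑ i, |x i - y i| ≤ 2 := by
      have h1 : ∑ i, |x i - y i| ≤ ∑ i, (|x i| + |y i|) :=
        Finset.sum_le_sum fun i _ => abs_sub _ _
      rw [Finset.sum_add_distrib] at h1
      linarith
    have hlt : μ * ∑ i, |x i - y i| < 2 * (D - 1) / D := by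
      have h2 : μ * ∑ i, |x i - y i| ≤ μ * 2 :=
        mul_le_mul_of_nonneg_left hT hμ0.le
      have h4 : 2 * (D - 1) / D = 2 * ((D - 1) / D) := by ring
      rw [h4]
      have : μ < (D - 1) / D := hμ
      linarith
    rw [hsum] at h3
    linarith
end

section
/- The 16 facet centers of the 4-dimensional crosspolytope K^4, i.e., the points (ε₁/4, ε₂/4, ε₃/4, ε₄/4) for ε ∈ {−1,1}^4, cannot be covered by 3 translates of μK^4 for any μ < 3/4. -/
open scoped BigOperators

/- ### Auxiliary machinery -/

/-- popcount for numbers < 16 -/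
def pc (n : ℕ) : ℕ := n % 2 + n / 2 % 2 + n / 4 % 2 + n / 8 % 2

/-- the 16 facet centers, indexed by `Fin 16` via binary digits -/
noncomputable def ptv (n : Fin 16) : Fin 4 → ℝ := fun i => (if (n : ℕ).testBit i then 1 else -1) / 4

lemma ptv_mem (n : Fin 16) : ptv n ∈ facetCenters 4 := by
  refine ⟨fun i => if (n : ℕ).testBit i then 1 else -1, fun i => ?_, ?_⟩
  · by_cases h : (n : ℕ).testBit i <;> simp [h]
  · funext i
    simp [ptv]

set_option synthInstance.maxSize 2000 in
set_option synthInstance.maxHeartbeats 1000000 in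
/-- Combinatorial core: among any 6 of the 11 points of the radius-2 Hamming ball,
two are at Hamming distance ≥ 3. -/
lemma boolLemma : ∀ b0 b1 b2 b3 b4 b5 b6 b7 b8 b9 b10 : Bool,
    5 < b0.toNat + b1.toNat + b2.toNat + b3.toNat + b4.toNat + b5.toNat + b6.toNat
        + b7.toNat + b8.toNat + b9.toNat + b10.toNat →
    (b1 && b6) = true ∨ (b1 && b9) = true ∨ (b1 && b10) = true ∨ (b2 && b5) = true ∨
    (b2 && b8) = true ∨ (b2 && b10) = true ∨ (b3 && b4) = true ∨ (b3 && b7) = true ∨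
    (b3 && b10) = true ∨ (b4 && b8) = true ∨ (b4 && b9) = true ∨ (b5 && b7) = true ∨
    (b5 && b9) = true ∨ (b6 && b7) = true ∨ (b6 && b8) = true := by decide

def Bfin : Finset ℕ := {0, 1, 2, 3, 4, 5, 6, 8, 9, 10, 12}

lemma mem_Bfin : ∀ z < 16, pc z ≤ 2 → z ∈ Bfin := by decide

lemma xor_lt : ∀ a < 16, ∀ b < 16, a ^^^ b < 16 := by decide

lemma ham_card : ∀ a b : Fin 16,
    ((Finset.univ.filter (fun i : Fin 4 => (a : ℕ).testBit i ≠ (b : ℕ).testBit i)).card)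
      = pc ((a : ℕ) ^^^ (b : ℕ)) := by decide

lemma dist_eq (a b : Fin 16) :
    ∑ i, |ptv a i - ptv b i| = (pc ((a : ℕ) ^^^ (b : ℕ)) : ℝ) / 2 := by
  have h1 : ∀ i : Fin 4, |ptv a i - ptv b i|
      = if ((a : ℕ).testBit i ≠ (b : ℕ).testBit i) then (1 : ℝ) / 2 else 0 := by
    intro i
    by_cases ha : (a : ℕ).testBit i <;> by_cases hb : (b : ℕ).testBit i <;>
      simp [ptv, ha, hb] <;> norm_num
  rw [Finset.sum_congr rfl fun i _ => h1 i, Finset.sum_ite, Finset.sum_const,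
    Finset.sum_const, ← ham_card a b]
  simp
  ring

lemma near {μ : ℝ} (hμ : 0 < μ) {u p : Fin 4 → ℝ} (h : p ∈ homCopy 4 μ u) :
    ∑ j, |p j - u j| ≤ μ := by
  obtain ⟨w, hw, rfl⟩ := h
  have hw' : ∑ i, |w i| ≤ 1 := hw
  have habs : ∀ j, |(μ • w + u) j - u j| = μ * |w j| := by
    intro j
    simp [abs_mul, abs_of_pos hμ]
  rw [Finset.sum_congr rfl fun j _ => habs j, ← Finset.mul_sum]
  nlinarith

lemma eIte (p : Prop) [Decidable p] : (if p then (1 : ℕ) else 0) = (decide p).toNat := by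
  by_cases h : p <;> simp [h]

theorem stmt_11 (μ : ℝ) (h0 : 0 < μ) (h1 : μ < 3 / 4) :
    ¬ ∃ u : Fin 3 → (Fin 4 → ℝ),
      facetCenters 4 ⊆ ⋃ i, homCopy 4 μ (u i) := by
  rintro ⟨u, hu⟩
  have hmem : ∀ n : Fin 16, ∃ i : Fin 3, ptv n ∈ homCopy 4 μ (u i) := by
    intro n
    have := hu (ptv_mem n)
    simpa [Set.mem_iUnion] using this
  choose f hf using hmem
  obtain ⟨i, -, hcard⟩ :=
    Finset.exists_lt_card_fiber_of_mul_lt_card_of_maps_to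
      (f := f) (t := (Finset.univ : Finset (Fin 3))) (n := 5) (s := Finset.univ)
      (fun a _ => Finset.mem_univ _) (by simp)
  set S : Finset (Fin 16) := Finset.univ.filter (fun x => f x = i) with hS
  have hScard : 5 < S.card := hcard
  have hpair : ∀ x ∈ S, ∀ y ∈ S, pc ((x : ℕ) ^^^ (y : ℕ)) ≤ 2 := by
    intro x hx y hy
    have hfx : f x = i := (Finset.mem_filter.mp hx).2
    have hfy : f y = i := (Finset.mem_filter.mp hy).2
    have hx' : ∑ j, |ptv x j - u i j| ≤ μ := by
      have := hf x; rw [hfx] at this; exact near h0 this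
    have hy' : ∑ j, |ptv y j - u i j| ≤ μ := by
      have := hf y; rw [hfy] at this; exact near h0 this
    have tri : ∀ j, |ptv x j - ptv y j| ≤ |ptv x j - u i j| + |ptv y j - u i j| := by
      intro j
      have h := abs_sub_le (ptv x j) (u i j) (ptv y j)
      rwa [abs_sub_comm (u i j) (ptv y j)] at h
    have h2 : ∑ j, |ptv x j - ptv y j| ≤ 2 * μ := by
      calc ∑ j, |ptv x j - ptv y j|
          ≤ ∑ j, (|ptv x j - u i j| + |ptv y j - u i j|) :=
            Finset.sum_le_sum fun j _ => tri j
        _ = (∑ j, |ptv x j - u i j|) + ∑ j, |ptv y j - u i j| := Finset.sum_add_distrib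
        _ ≤ 2 * μ := by linarith
    rw [dist_eq] at h2
    have h3 : (pc ((x : ℕ) ^^^ (y : ℕ)) : ℝ) < 3 := by linarith
    have h4 : pc ((x : ℕ) ^^^ (y : ℕ)) < 3 := by exact_mod_cast h3
    omega
  obtain ⟨a0, ha0⟩ := Finset.card_pos.mp (by omega : 0 < S.card)
  set T : Finset ℕ := S.image (fun x : Fin 16 => (x : ℕ) ^^^ (a0 : ℕ)) with hT
  have hTcard : 5 < T.card := by
    rw [hT, Finset.card_image_of_injOn]
    · exact hScard
    · intro x _ y _ hxy
      have h := congrArg (fun z => z ^^^ (a0 : ℕ)) hxy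
      simp only [Nat.xor_xor_cancel_right] at h
      exact Fin.val_injective h
  have hTB : T ⊆ Bfin := by
    intro z hz
    obtain ⟨x, hx, rfl⟩ := Finset.mem_image.mp hz
    exact mem_Bfin _ (xor_lt _ x.isLt _ a0.isLt) (hpair x hx a0 ha0)
  have key : ∀ p q : ℕ, p ∈ T → q ∈ T → 3 ≤ pc (p ^^^ q) → False := by
    intro p q hp hq h3
    obtain ⟨x, hx, rfl⟩ := Finset.mem_image.mp hp
    obtain ⟨y, hy, rfl⟩ := Finset.mem_image.mp hq
    have e : ((x : ℕ) ^^^ (a0 : ℕ)) ^^^ ((y : ℕ) ^^^ (a0 : ℕ)) = (x : ℕ) ^^^ (y : ℕ) := by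
      rw [Nat.xor_assoc, Nat.xor_comm ((y : ℕ)) ((a0 : ℕ)), ← Nat.xor_assoc ((a0 : ℕ)),
        Nat.xor_self, Nat.zero_xor]
    rw [e] at h3
    have := hpair x hx y hy
    omega
  have hsub : Bfin.filter (· ∈ T) = T := by
    ext z
    simp only [Finset.mem_filter]
    exact ⟨fun h => h.2, fun h => ⟨hTB h, h⟩⟩
  have hsum : 5 < ∑ a ∈ Bfin, if a ∈ T then 1 else 0 := by
    rw [← Finset.card_filter, hsub]; exact hTcard
  have hyp : 5 < (decide ((0:ℕ) ∈ T)).toNat + (decide ((1:ℕ) ∈ T)).toNat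
      + (decide ((2:ℕ) ∈ T)).toNat + (decide ((3:ℕ) ∈ T)).toNat + (decide ((4:ℕ) ∈ T)).toNat
      + (decide ((5:ℕ) ∈ T)).toNat + (decide ((6:ℕ) ∈ T)).toNat + (decide ((8:ℕ) ∈ T)).toNat
      + (decide ((9:ℕ) ∈ T)).toNat + (decide ((10:ℕ) ∈ T)).toNat
      + (decide ((12:ℕ) ∈ T)).toNat := by
    rw [show Bfin = {0, 1, 2, 3, 4, 5, 6, 8, 9, 10, 12} from rfl,
      Finset.sum_insert (by decide), Finset.sum_insert (by decide),
      Finset.sum_insert (by decide), Finset.sum_insert (by decide),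
      Finset.sum_insert (by decide), Finset.sum_insert (by decide),
      Finset.sum_insert (by decide), Finset.sum_insert (by decide),
      Finset.sum_insert (by decide), Finset.sum_insert (by decide),
      Finset.sum_singleton] at hsum
    simp only [eIte] at hsum
    omega
  have hb := boolLemma _ _ _ _ _ _ _ _ _ _ _ hyp
  rcases hb with h|h|h|h|h|h|h|h|h|h|h|h|h|h|h <;>
    · simp only [Bool.and_eq_true, decide_eq_true_eq] at h
      exact key _ _ h.1 h.2 (by decide)
end

section
/- The 32 facet centers of the 5-dimensional crosspolytope K^5, i.e., the points (ε₁/5, …, ε₅/5) for ε ∈ {−1,1}^5, cannot be covered by 3 translates of μK^5 for any μ < 4/5. -/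
open scoped BigOperators

/-! ### Auxiliary combinatorics -/

def wt4 (n : ℕ) : ℕ := n % 2 + n / 2 % 2 + n / 4 % 2 + n / 8 % 2
def wt5 (n : ℕ) : ℕ := wt4 (n % 16) + n / 16 % 2
def enc5 (x : Fin 5 → Bool) : ℕ :=
  (cond (x 0) 1 0) + 2 * (cond (x 1) 1 0) + 4 * (cond (x 2) 1 0) +
  8 * (cond (x 3) 1 0) + 16 * (cond (x 4) 1 0)
def Dd (x y : Fin 5 → Bool) : ℕ :=
  (if x 0 = y 0 then 0 else 1) + (if x 1 = y 1 then 0 else 1) + (if x 2 = y 2 then 0 else 1) +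
  (if x 3 = y 3 then 0 else 1) + (if x 4 = y 4 then 0 else 1)
def far (a b : ℕ) : Bool := 3 ≤ wt4 (a ^^^ b)
def good6 (a b c d e f : ℕ) : Bool :=
  far a b || far a c || far a d || far a e || far a f ||
  far b c || far b d || far b e || far b f ||
  far c d || far c e || far c f || far d e || far d f || far e f

theorem key6 : ∀ f < 16, ∀ e < f, ∀ d < e, ∀ c < d, ∀ b < c, ∀ a < b,
    good6 a b c d e f = true := by decide

theorem inj5 : ∀ x y : Fin 5 → Bool, Dd x y ≤ 3 → wt5 (enc5 x) % 2 = wt5 (enc5 y) % 2 →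
    enc5 x % 16 = enc5 y % 16 → x = y := by decide

theorem close4 : ∀ x y : Fin 5 → Bool, Dd x y ≤ 3 → wt5 (enc5 x) % 2 = wt5 (enc5 y) % 2 →
    wt4 ((enc5 x % 16) ^^^ (enc5 y % 16)) ≤ 2 := by decide

/-- Kleitman-type bound in the 4-cube: a set of diameter ≤ 2 has at most 5 elements. -/
lemma card_le_five (T : Finset ℕ) (h16 : ∀ a ∈ T, a < 16)
    (hp : ∀ a ∈ T, ∀ b ∈ T, wt4 (a ^^^ b) ≤ 2) : T.card ≤ 5 := by
  by_contra h
  push_neg at h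
  obtain ⟨U, hUT, hU6⟩ := Finset.exists_subset_card_eq (s := T) (n := 6) (by omega)
  set g := U.orderIsoOfFin hU6 with hg
  have memT : ∀ i : Fin 6, (g i : ℕ) ∈ T := fun i => hUT (g i).2
  have mono : ∀ i j : Fin 6, i < j → (g i : ℕ) < (g j : ℕ) := by
    intro i j hij
    exact_mod_cast (g.lt_iff_lt.2 hij)
  have key := key6 (g 5) (h16 _ (memT 5)) (g 4) (mono 4 5 (by decide)) (g 3) (mono 3 4 (by decide))
    (g 2) (mono 2 3 (by decide)) (g 1) (mono 1 2 (by decide)) (g 0) (mono 0 1 (by decide))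
  simp only [good6, far, Bool.or_eq_true, decide_eq_true_eq] at key
  have hh : ∀ i j : Fin 6, ¬ (3 ≤ wt4 ((g i : ℕ) ^^^ (g j : ℕ))) := by
    intro i j hc
    have h2 := hp _ (memT i) _ (memT j)
    exact absurd hc (by linarith)
  rcases key with ((((((((((((((h) | h) | h) | h) | h) | h) | h) | h) | h) | h) | h) | h) | h) | h) | h <;>
    first
      | exact hh 0 1 h | exact hh 0 2 h | exact hh 0 3 h | exact hh 0 4 h | exact hh 0 5 h
      | exact hh 1 2 h | exact hh 1 3 h | exact hh 1 4 h | exact hh 1 5 h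
      | exact hh 2 3 h | exact hh 2 4 h | exact hh 2 5 h
      | exact hh 3 4 h | exact hh 3 5 h | exact hh 4 5 h

/-- A same-parity class of a set of sign vectors of Hamming diameter ≤ 3 has ≤ 5 elements. -/
lemma class_le_five (F : Finset (Fin 5 → Bool))
    (hp : ∀ x ∈ F, ∀ y ∈ F, Dd x y ≤ 3)
    (hpar : ∀ x ∈ F, ∀ y ∈ F, wt5 (enc5 x) % 2 = wt5 (enc5 y) % 2) : F.card ≤ 5 := by
  have hinj : Set.InjOn (fun x => enc5 x % 16) F := by
    intro x hx y hy hxy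
    exact inj5 x y (hp x hx y hy) (hpar x hx y hy) hxy
  rw [← Finset.card_image_of_injOn hinj]
  apply card_le_five
  · intro a ha
    rw [Finset.mem_image] at ha
    obtain ⟨x, _, rfl⟩ := ha
    exact Nat.mod_lt _ (by norm_num)
  · intro a ha b hb
    rw [Finset.mem_image] at ha hb
    obtain ⟨x, hx, rfl⟩ := ha
    obtain ⟨y, hy, rfl⟩ := hb
    exact close4 x y (hp x hx y hy) (hpar x hx y hy)

/-- A set of sign vectors of Hamming diameter ≤ 3 has at most 10 elements. -/
lemma fiber_le_ten (F : Finset (Fin 5 → Bool))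
    (hp : ∀ x ∈ F, ∀ y ∈ F, Dd x y ≤ 3) : F.card ≤ 10 := by
  classical
  have hsplit := Finset.card_filter_add_card_filter_not
    (s := F) (p := fun x => wt5 (enc5 x) % 2 = 0)
  have h0 : (F.filter (fun x => wt5 (enc5 x) % 2 = 0)).card ≤ 5 := by
    apply class_le_five
    · intro x hx y hy
      exact hp x (Finset.mem_filter.1 hx).1 y (Finset.mem_filter.1 hy).1
    · intro x hx y hy
      rw [(Finset.mem_filter.1 hx).2, (Finset.mem_filter.1 hy).2]
  have h1 : (F.filter (fun x => ¬ (wt5 (enc5 x) % 2 = 0))).card ≤ 5 := by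
    apply class_le_five
    · intro x hx y hy
      exact hp x (Finset.mem_filter.1 hx).1 y (Finset.mem_filter.1 hy).1
    · intro x hx y hy
      have hx2 := (Finset.mem_filter.1 hx).2
      have hy2 := (Finset.mem_filter.1 hy).2
      omega
  omega

/-! ### Analytic bridge -/

/-- Sign vector and facet center attached to `b : Fin 5 → Bool`. -/
noncomputable def ctr (b : Fin 5 → Bool) : Fin 5 → ℝ :=
  fun i => (if b i then (1:ℝ) else -1) / ((5:ℕ) : ℝ)

lemma ctr_mem (b : Fin 5 → Bool) : ctr b ∈ facetCenters 5 := by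
  refine ⟨fun i => if b i then (1:ℝ) else -1, fun i => ?_, rfl⟩
  by_cases h : b i <;> simp [h]

lemma dist_le {μ : ℝ} (h0 : 0 < μ) (v c : Fin 5 → ℝ) (h : c ∈ homCopy 5 μ v) :
    ∑ j, |c j - v j| ≤ μ := by
  obtain ⟨x, hx, he⟩ := h
  have hx' : ∑ i, |x i| ≤ 1 := hx
  have hc : ∀ j, c j - v j = μ * x j := by
    intro j
    have := congrFun he j
    simp only [Pi.add_apply, Pi.smul_apply, smul_eq_mul] at this
    linarith [this]
  calc ∑ j, |c j - v j| = ∑ j, μ * |x j| := by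
        refine Finset.sum_congr rfl fun j _ => ?_
        rw [hc j, abs_mul, abs_of_pos h0]
    _ = μ * ∑ j, |x j| := (Finset.mul_sum _ _ _).symm
    _ ≤ μ * 1 := by nlinarith
    _ = μ := mul_one μ

lemma sum_ctr (x y : Fin 5 → Bool) :
    ∑ j, |ctr x j - ctr y j| = (Dd x y : ℝ) * (2 / 5) := by
  have h : ∀ j, |ctr x j - ctr y j| = (if x j = y j then (0:ℝ) else 1) * (2 / 5) := by
    intro j
    unfold ctr
    cases hx : x j <;> cases hy : y j <;> norm_num
  rw [Finset.sum_congr rfl fun j _ => h j, ← Finset.sum_mul]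
  congr 1
  rw [Fin.sum_univ_five]
  unfold Dd
  push_cast
  rfl

theorem stmt_12 (μ : ℝ) (h0 : 0 < μ) (h1 : μ < 4 / 5) :
    ¬ ∃ u : Fin 3 → (Fin 5 → ℝ),
      facetCenters 5 ⊆ ⋃ i, homCopy 5 μ (u i) := by
  rintro ⟨u, hsub⟩
  have hex : ∀ b : Fin 5 → Bool, ∃ i, ctr b ∈ homCopy 5 μ (u i) := fun b =>
    Set.mem_iUnion.mp (hsub (ctr_mem b))
  choose f hf using hex
  have hD : ∀ x y : Fin 5 → Bool, f x = f y → Dd x y ≤ 3 := by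
    intro x y hxy
    have h1x := dist_le h0 (u (f x)) (ctr x) (hf x)
    have h1y := dist_le h0 (u (f x)) (ctr y) (hxy ▸ hf y)
    have tri : ∑ j, |ctr x j - ctr y j| ≤
        ∑ j, (|ctr x j - u (f x) j| + |u (f x) j - ctr y j|) :=
      Finset.sum_le_sum fun j _ => abs_sub_le _ _ _
    rw [Finset.sum_add_distrib] at tri
    have hcomm : ∑ j, |u (f x) j - ctr y j| = ∑ j, |ctr y j - u (f x) j| := by
      simp [abs_sub_comm]
    rw [hcomm, sum_ctr] at tri
    have hlt : (Dd x y : ℝ) * (2 / 5) < 8 / 5 := by linarith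
    by_contra hc
    push_neg at hc
    have : (4 : ℝ) ≤ (Dd x y : ℝ) := by exact_mod_cast hc
    nlinarith
  classical
  have count := Finset.card_eq_sum_card_fiberwise
    (f := f) (s := (Finset.univ : Finset (Fin 5 → Bool))) (t := Finset.univ)
    (fun x _ => Finset.mem_univ _)
  have c32 : (Finset.univ : Finset (Fin 5 → Bool)).card = 32 := by decide
  have hfib : ∀ i : Fin 3, (Finset.univ.filter (fun x => f x = i)).card ≤ 10 := by
    intro i
    apply fiber_le_ten
    intro x hx y hy
    have hxi := (Finset.mem_filter.1 hx).2
    have hyi := (Finset.mem_filter.1 hy).2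
    exact hD x y (by rw [hxi, hyi])
  have hsum : ∑ i : Fin 3, (Finset.univ.filter (fun x => f x = i)).card ≤ 30 := by
    calc ∑ i : Fin 3, (Finset.univ.filter (fun x => f x = i)).card
        ≤ ∑ _i : Fin 3, 10 := Finset.sum_le_sum fun i _ => hfib i
      _ = 30 := by simp
  omega
end

section
/- For m = 2d + 3 = 13 and d = 5, the covering functional of the 5-dimensional crosspolytope satisfies γ_{13}^5(K^5) = 4/5. -/
open scoped BigOperators

namespace Stmt14


/-- Adjacency table: bit `w` of `nbrTbl[v]` is set iff `v ≠ w` and the Hamming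
distance of `v, w` (as 5-bit vectors) is at most 3. -/
def nbrTbl : List Nat :=
[394231806, 733986813, 1306517499, 2398089207, 1912076271, 3002858463, 3573415359, 3909025407, 2132278911, 3207331263, 3746429919, 4019124207, 4151439351, 4222803963, 4258578429, 4276649982, 2147358591, 3221040063, 3757788639, 4025978607, 4159664631, 4225741563, 4257207549, 4269795582, 4269768471, 4257201963, 4225752909, 4159696782, 4026005361, 3757833138, 3221093844, 2147417832]

def nbr (v : Nat) : Nat := nbrTbl.getD v 0

/-- Fueled popcount. -/
def popF : Nat → Nat → Nat
  | 0, _ => 0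
  | f + 1, n => if n = 0 then 0 else popF f (n / 2) + n % 2

theorem popF_sound : ∀ (f n : Nat), n < 2 ^ f → ∀ S : Finset Nat,
    (∀ x ∈ S, n.testBit x = true) → S.card ≤ popF f n := by
  intro f
  induction f with
  | zero =>
    intro n hn S hS
    have hn0 : n = 0 := by simpa using hn
    have : S = ∅ := Finset.eq_empty_of_forall_notMem
      (fun x hx => by simpa [hn0] using hS x hx)
    simp [this]
  | succ f ih =>
    intro n hn S hS
    by_cases h0 : n = 0
    · have : S = ∅ := Finset.eq_empty_of_forall_notMem
        (fun x hx => by simpa [h0] using hS x hx)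
      simp [this, popF]
    · rw [popF, if_neg h0]
      have hdiv : n / 2 < 2 ^ f := by
        have h2 : (2:ℕ) ^ (f + 1) = 2 ^ f * 2 := by ring
        omega
      have hS1 : ∀ y ∈ (S.erase 0).image (· - 1), (n / 2).testBit y = true := by
        intro y hy
        obtain ⟨x, hx, rfl⟩ := Finset.mem_image.mp hy
        have hx0 : x ≠ 0 := Finset.ne_of_mem_erase hx
        have hxS : x ∈ S := Finset.mem_of_mem_erase hx
        rw [Nat.testBit_div_two]
        have : x - 1 + 1 = x := by omega
        rw [this]
        exact hS x hxS
      have hcard1 : ((S.erase 0).image (· - 1)).card = (S.erase 0).card := by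
        apply Finset.card_image_of_injOn
        intro a ha b hb hab
        have ha0 : a ≠ 0 := Finset.ne_of_mem_erase ha
        have hb0 : b ≠ 0 := Finset.ne_of_mem_erase hb
        simp only at hab
        omega
      have h1 : (S.erase 0).card ≤ popF f (n / 2) := by
        rw [← hcard1]; exact ih (n / 2) hdiv _ hS1
      by_cases hz : 0 ∈ S
      · have hmod : n % 2 = 1 := by
          have := hS 0 hz
          rw [Nat.testBit_zero] at this
          exact of_decide_eq_true this
        have := Finset.card_erase_of_mem hz
        omega
      · have : S.erase 0 = S := Finset.erase_eq_of_notMem hz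
        rw [this] at h1
        omega

def pop (n : Nat) : Nat := popF 32 n

/-- Fueled least-set-bit. -/
def lsbF : Nat → Nat → Nat
  | 0, _ => 0
  | f + 1, n => if n % 2 = 1 then 0 else lsbF f (n / 2) + 1

theorem lsbF_testBit : ∀ (f n : Nat), 0 < n → n < 2 ^ f → n.testBit (lsbF f n) = true := by
  intro f
  induction f with
  | zero => intro n h1 h2; omega
  | succ f ih =>
    intro n h1 h2
    rw [lsbF]
    by_cases hodd : n % 2 = 1
    · rw [if_pos hodd, Nat.testBit_zero]
      exact decide_eq_true hodd
    · rw [if_neg hodd, Nat.testBit_succ]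
      apply ih
      · omega
      · have : (2:ℕ) ^ (f + 1) = 2 ^ f * 2 := by ring
        omega

/-- Branch-and-bound max-clique checker (with fuel). -/
def chkF : Nat → Nat → Nat → Bool
  | 0, _, _ => false
  | f + 1, cands, k =>
    if cands = 0 then true
    else if pop cands ≤ k then true
    else
      match k with
      | 0 => false
      | k + 1 =>
        let v := lsbF 32 cands
        chkF f (cands &&& nbr v) k && chkF f (cands ^^^ (2 ^ v)) (k + 1)

theorem chkF_sound : ∀ (f cands k : Nat), cands < 2 ^ 32 →
    chkF f cands k = true →
    ∀ S : Finset Nat, (∀ x ∈ S, cands.testBit x = true) →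
    (∀ x ∈ S, ∀ y ∈ S, x ≠ y → (nbr x).testBit y = true) → S.card ≤ k := by
  intro f
  induction f with
  | zero => intro cands k _ h; simp [chkF] at h
  | succ f ih =>
    intro cands k hlt h S hS hclq
    by_cases hz : cands = 0
    · have : S = ∅ := Finset.eq_empty_of_forall_notMem
        (fun x hx => by simpa [hz] using hS x hx)
      simp [this]
    by_cases hprune : pop cands ≤ k
    · have : S.card ≤ pop cands := popF_sound 32 cands hlt S hS
      omega
    rcases k with _ | k
    · have h' : (if cands = 0 then true else
          if pop cands ≤ 0 then true else false) = true := h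
      rw [if_neg hz, if_neg hprune] at h'
      exact absurd h' (by simp)
    · have h' : (if cands = 0 then true else
          if pop cands ≤ k + 1 then true else
            chkF f (cands &&& nbr (lsbF 32 cands)) k &&
              chkF f (cands ^^^ 2 ^ (lsbF 32 cands)) (k + 1)) = true := h
      rw [if_neg hz, if_neg hprune, Bool.and_eq_true] at h'
      obtain ⟨h1, h2⟩ := h'
      set v := lsbF 32 cands with hv
      have hvbit : cands.testBit v = true := lsbF_testBit 32 cands (by omega) hlt
      by_cases hvS : v ∈ S
      · have hlt' : cands &&& nbr v < 2 ^ 32 := lt_of_le_of_lt Nat.and_le_left hlt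
        have hcard : (S.erase v).card ≤ k := by
          apply ih (cands &&& nbr v) k hlt' h1
          · intro x hx
            have hxS := Finset.mem_of_mem_erase hx
            have hxv := Finset.ne_of_mem_erase hx
            rw [Nat.testBit_land, hS x hxS, hclq v hvS x hxS (Ne.symm hxv)]
            rfl
          · intro x hx y hy hxy
            exact hclq x (Finset.mem_of_mem_erase hx) y (Finset.mem_of_mem_erase hy) hxy
        have := Finset.card_erase_of_mem hvS
        omega
      · have hvlt : v < 32 := by
          by_contra hge
          have hle : (2:ℕ) ^ 32 ≤ 2 ^ v := Nat.pow_le_pow_right (by norm_num) (by omega)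
          have hf : cands.testBit v = false :=
            Nat.testBit_lt_two_pow (lt_of_lt_of_le hlt hle)
          rw [hvbit] at hf
          simp at hf
        have hlt' : cands ^^^ 2 ^ v < 2 ^ 32 := by
          apply Nat.xor_lt_two_pow hlt
          exact Nat.pow_lt_pow_right (by norm_num) hvlt
        apply ih (cands ^^^ 2 ^ v) (k + 1) hlt' h2 S _ hclq
        intro x hx
        have hxv : x ≠ v := fun hh => hvS (hh ▸ hx)
        rw [Nat.testBit_xor, hS x hx, Nat.testBit_two_pow]
        simp [Ne.symm hxv]

set_option maxHeartbeats 4000000 in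
theorem chkF_run : chkF 64 (2 ^ 32 - 1) 10 = true := by decide

theorem clique_bound (S : Finset Nat) (h32 : ∀ x ∈ S, x < 32)
    (hclq : ∀ x ∈ S, ∀ y ∈ S, x ≠ y → (nbr x).testBit y = true) : S.card ≤ 10 := by
  apply chkF_sound 64 (2 ^ 32 - 1) 10 (by norm_num) chkF_run S _ hclq
  intro x hx
  rw [Nat.testBit_two_pow_sub_one]
  exact decide_eq_true (h32 x hx)



noncomputable def sgn (b : Bool) : ℝ := if b then 1 else -1

noncomputable def vert (i : Fin 5) (b : Bool) : Fin 5 → ℝ :=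
  fun j => if j = i then sgn b else 0

noncomputable def fc (ε : Fin 5 → Bool) : Fin 5 → ℝ := fun j => sgn (ε j) / 5

def ham (a b : Fin 5 → Bool) : ℕ := (Finset.univ.filter (fun i => a i ≠ b i)).card

lemma vert_mem (i : Fin 5) (b : Bool) : vert i b ∈ cross 5 := by
  have h : ∀ j, |vert i b j| = if j = i then 1 else 0 := by
    intro j
    by_cases hj : j = i <;> cases b <;> simp [vert, sgn, hj]
  show ∑ j, |vert i b j| ≤ 1
  rw [Finset.sum_congr rfl (fun j _ => h j)]
  simp

lemma fc_mem (ε : Fin 5 → Bool) : fc ε ∈ cross 5 := by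
  have h : ∀ j, |fc ε j| = 1/5 := by
    intro j; cases hε : ε j <;> simp [fc, sgn, hε] <;> norm_num
  show ∑ j, |fc ε j| ≤ 1
  rw [Finset.sum_congr rfl (fun j _ => h j)]
  simp

lemma homCopy_dist {μ : ℝ} (hμ : 0 ≤ μ) {u p q : Fin 5 → ℝ}
    (hp : p ∈ homCopy 5 μ u) (hq : q ∈ homCopy 5 μ u) :
    ∑ j, |p j - q j| ≤ 2 * μ := by
  obtain ⟨a, ha, rfl⟩ := hp
  obtain ⟨b, hb, rfl⟩ := hq
  have ha' : ∑ j, |a j| ≤ 1 := ha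
  have hb' : ∑ j, |b j| ≤ 1 := hb
  have hterm : ∀ j : Fin 5, |(μ • a + u) j - (μ • b + u) j| = μ * |a j - b j| := by
    intro j
    simp only [Pi.add_apply, Pi.smul_apply, smul_eq_mul]
    rw [show μ * a j + u j - (μ * b j + u j) = μ * (a j - b j) by ring,
      abs_mul, abs_of_nonneg hμ]
  rw [Finset.sum_congr rfl (fun j _ => hterm j), ← Finset.mul_sum]
  have h1 : ∑ j, |a j - b j| ≤ 2 := by
    calc ∑ j, |a j - b j| ≤ ∑ j, (|a j| + |b j|) :=
          Finset.sum_le_sum (fun j _ => abs_sub (a j) (b j))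
      _ = (∑ j, |a j|) + ∑ j, |b j| := Finset.sum_add_distrib
      _ ≤ 2 := by linarith
  nlinarith

lemma vert_dist {i i' : Fin 5} {b b' : Bool} (h : (i, b) ≠ (i', b')) :
    (8:ℝ)/5 ≤ ∑ j, |vert i b j - vert i' b' j| := by
  by_cases hi : i = i'
  · subst hi
    have hb : b ≠ b' := fun hb => h (by rw [hb])
    have hterm : |vert i b i - vert i b' i| = 2 := by
      cases b <;> cases b' <;> simp_all [vert, sgn] <;> norm_num
    have h2 : |vert i b i - vert i b' i| ≤ ∑ j, |vert i b j - vert i b' j| :=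
      Finset.single_le_sum (f := fun j => |vert i b j - vert i b' j|)
        (fun j _ => abs_nonneg _) (Finset.mem_univ i)
    rw [hterm] at h2
    linarith
  · have hsum : ∑ j ∈ ({i, i'} : Finset (Fin 5)), |vert i b j - vert i' b' j| = 2 := by
      rw [Finset.sum_pair hi]
      have h1 : |vert i b i - vert i' b' i| = 1 := by
        cases b <;> simp [vert, hi, Ne.symm hi, sgn] <;> norm_num
      have h2 : |vert i b i' - vert i' b' i'| = 1 := by
        cases b' <;> simp [vert, hi, Ne.symm hi, sgn] <;> norm_num
      rw [h1, h2]; norm_num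
    have hle : ∑ j ∈ ({i, i'} : Finset (Fin 5)), |vert i b j - vert i' b' j| ≤
        ∑ j, |vert i b j - vert i' b' j| :=
      Finset.sum_le_sum_of_subset_of_nonneg (Finset.subset_univ _)
        (fun j _ _ => abs_nonneg _)
    rw [hsum] at hle
    linarith

lemma vert_fc_dist (i : Fin 5) (b : Bool) (ε : Fin 5 → Bool) :
    (8:ℝ)/5 ≤ ∑ j, |vert i b j - fc ε j| := by
  have hoff : ∀ j ∈ Finset.univ.erase i, |vert i b j - fc ε j| = 1/5 := by
    intro j hj
    have hj' : j ≠ i := Finset.ne_of_mem_erase hj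
    cases hε : ε j <;> simp [vert, fc, hj', sgn, hε] <;> norm_num
  have hi : (4:ℝ)/5 ≤ |vert i b i - fc ε i| := by
    cases b <;> cases hε : ε i <;> simp [vert, fc, sgn, hε] <;>
      norm_num [abs_of_nonneg]
  have hsplit : ∑ j, |vert i b j - fc ε j| =
      |vert i b i - fc ε i| + ∑ j ∈ Finset.univ.erase i, |vert i b j - fc ε j| :=
    (Finset.add_sum_erase _ _ (Finset.mem_univ i)).symm
  have hsum : ∑ j ∈ Finset.univ.erase i, |vert i b j - fc ε j| = 4/5 := by
    rw [Finset.sum_congr rfl hoff, Finset.sum_const,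
      Finset.card_erase_of_mem (Finset.mem_univ i)]
    simp
    norm_num
  rw [hsplit, hsum]
  linarith

lemma fc_dist {ε ε' : Fin 5 → Bool} (h : 4 ≤ ham ε ε') :
    (8:ℝ)/5 ≤ ∑ j, |fc ε j - fc ε' j| := by
  have hterm : ∀ j : Fin 5, |fc ε j - fc ε' j| = if ε j ≠ ε' j then 2/5 else 0 := by
    intro j
    cases hε : ε j <;> cases hε' : ε' j <;> simp [fc, sgn, hε, hε'] <;> norm_num
  rw [Finset.sum_congr rfl (fun j _ => hterm j), ← Finset.sum_filter]
  rw [Finset.sum_const]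
  show (8:ℝ)/5 ≤ (ham ε ε') • ((2:ℝ)/5)
  rw [nsmul_eq_mul]
  have : (4:ℝ) ≤ (ham ε ε' : ℝ) := by exact_mod_cast h
  linarith

/-! ### Bridge to the mask world -/

def enc (a : Fin 5 → Bool) : ℕ :=
  (if a 0 then 1 else 0) + 2 * (if a 1 then 1 else 0) + 4 * (if a 2 then 1 else 0)
    + 8 * (if a 3 then 1 else 0) + 16 * (if a 4 then 1 else 0)

lemma enc_lt : ∀ a : Fin 5 → Bool, enc a < 32 := by decide

lemma enc_inj : Function.Injective enc := by
  intro a b h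
  revert h
  revert a b
  decide

lemma nbr_enc : ∀ a b : Fin 5 → Bool, a ≠ b → ham a b ≤ 3 →
    (nbr (enc a)).testBit (enc b) = true := by decide

theorem anticode (S : Finset (Fin 5 → Bool))
    (h : ∀ a ∈ S, ∀ b ∈ S, a ≠ b → ham a b ≤ 3) : S.card ≤ 10 := by
  have himg : (S.image enc).card ≤ 10 := by
    apply clique_bound
    · intro x hx
      obtain ⟨a, _, rfl⟩ := Finset.mem_image.mp hx
      exact enc_lt a
    · intro x hx y hy hxy
      obtain ⟨a, ha, rfl⟩ := Finset.mem_image.mp hx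
      obtain ⟨b, hb, rfl⟩ := Finset.mem_image.mp hy
      have hab : a ≠ b := fun hh => hxy (hh ▸ rfl)
      exact nbr_enc a b hab (h a ha b hb hab)
  rwa [Finset.card_image_of_injective S enc_inj] at himg

/-! ### Upper bound -/

noncomputable def ctr : Fin 13 → Fin 5 → ℝ := fun k =>
  if h : k.val < 10 then ((1:ℝ)/5) • vert ⟨k.val / 2, by omega⟩ (decide (k.val % 2 = 0))
  else 0

theorem covers_ub : Covers 5 13 (4/5) := by
  classical
  refine ⟨ctr, ?_⟩
  intro x hx
  have hs : ∑ j, |x j| ≤ 1 := hx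
  obtain ⟨i, -, hmax⟩ := Finset.exists_max_image (Finset.univ : Finset (Fin 5))
    (fun j => |x j|) ⟨0, Finset.mem_univ 0⟩
  have hmax' : ∀ j : Fin 5, |x j| ≤ |x i| := fun j => hmax j (Finset.mem_univ j)
  have h5 : ∑ j, |x j| ≤ 5 * |x i| := by
    calc ∑ j, |x j| ≤ ∑ _j : Fin 5, |x i| := Finset.sum_le_sum (fun j _ => hmax' j)
      _ = 5 * |x i| := by rw [Finset.sum_const, Finset.card_univ, Fintype.card_fin, nsmul_eq_mul]; norm_num
  have hi5 := i.isLt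
  refine Set.mem_iUnion.mpr
    ⟨⟨2 * i.val + (if 0 ≤ x i then 0 else 1), by split <;> omega⟩, ?_⟩
  set k : Fin 13 := ⟨2 * i.val + (if 0 ≤ x i then 0 else 1), by split <;> omega⟩ with hkdef
  have hctr : ctr k = fun j => if j = i then (if 0 ≤ x i then (1:ℝ)/5 else -(1/5)) else 0 := by
    by_cases hxi : 0 ≤ x i
    · have hkv : (k : Fin 13).val = 2 * i.val := by simp [hkdef, hxi]
      funext j
      rw [ctr, dif_pos (show k.val < 10 by omega)]
      have hidx : (⟨k.val / 2, by omega⟩ : Fin 5) = i :=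
        Fin.ext (show k.val / 2 = i.val by omega)
      have hmod : k.val % 2 = 0 := by omega
      rw [hidx, hmod]
      simp only [Pi.smul_apply, vert, smul_eq_mul]
      by_cases hji : j = i <;> simp [hji, hxi, sgn]
      all_goals norm_num
    · have hkv : (k : Fin 13).val = 2 * i.val + 1 := by simp [hkdef, hxi]
      funext j
      rw [ctr, dif_pos (show k.val < 10 by omega)]
      have hidx : (⟨k.val / 2, by omega⟩ : Fin 5) = i :=
        Fin.ext (show k.val / 2 = i.val by omega)
      have hmod : k.val % 2 = 1 := by omega
      rw [hidx, hmod]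
      simp only [Pi.smul_apply, vert, smul_eq_mul]
      by_cases hji : j = i <;> simp [hji, hxi, sgn]
      all_goals norm_num
  refine ⟨fun j => (5/4) * (x j - ctr k j), ?_, ?_⟩
  · show ∑ j, |(5/4) * (x j - ctr k j)| ≤ 1
    have hterm : ∀ j : Fin 5, |(5/4) * (x j - ctr k j)| = (5/4) * |x j - ctr k j| := by
      intro j; rw [abs_mul]; norm_num
    rw [Finset.sum_congr rfl (fun j _ => hterm j), ← Finset.mul_sum]
    have hsplit : ∑ j, |x j - ctr k j| =
        |x i - ctr k i| + ∑ j ∈ Finset.univ.erase i, |x j - ctr k j| :=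
      (Finset.add_sum_erase _ _ (Finset.mem_univ i)).symm
    have hoff : ∀ j ∈ Finset.univ.erase i, |x j - ctr k j| = |x j| := by
      intro j hj
      rw [hctr]
      simp [Finset.ne_of_mem_erase hj]
    have hxsplit : ∑ j, |x j| = |x i| + ∑ j ∈ Finset.univ.erase i, |x j| :=
      (Finset.add_sum_erase _ _ (Finset.mem_univ i)).symm
    have hkey : |x i - ctr k i| + (∑ j, |x j| - |x i|) ≤ 4/5 := by
      have hctri : ctr k i = (if 0 ≤ x i then (1:ℝ)/5 else -(1/5)) := by rw [hctr]; simp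
      rw [hctri]
      by_cases hxi : 0 ≤ x i
      · rw [if_pos hxi]
        have habs : |x i| = x i := abs_of_nonneg hxi
        rw [habs] at h5 ⊢
        rcases abs_cases (x i - 1/5) with ⟨heq, -⟩ | ⟨heq, -⟩ <;> rw [heq] <;> linarith
      · rw [if_neg hxi]
        have habs : |x i| = -(x i) := abs_of_neg (lt_of_not_ge hxi)
        rw [habs] at h5 ⊢
        rcases abs_cases (x i - -(1/5)) with ⟨heq, -⟩ | ⟨heq, -⟩ <;> rw [heq] <;> linarith
    have hfin : ∑ j, |x j - ctr k j| ≤ 4/5 := by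
      rw [hsplit, Finset.sum_congr rfl hoff]
      have herase : ∑ j ∈ Finset.univ.erase i, |x j| = ∑ j, |x j| - |x i| := by
        rw [hxsplit]; ring
      rw [herase]
      exact hkey
    linarith
  · funext j
    simp only [Pi.add_apply, Pi.smul_apply, smul_eq_mul]
    ring

/-! ### Lower bound -/

theorem covers_lb (μ : ℝ) (hμ0 : 0 < μ) (hμ : μ < 4/5) : ¬ Covers 5 13 μ := by
  rintro ⟨u, hu⟩
  have h2μ : 2 * μ < 8/5 := by linarith
  -- choose a translate for each vertex
  have hv : ∀ p : Fin 5 × Bool, ∃ n : Fin 13, vert p.1 p.2 ∈ homCopy 5 μ (u n) := by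
    intro p
    have := hu (vert_mem p.1 p.2)
    rwa [Set.mem_iUnion] at this
  choose Tv hTv using hv
  have hc : ∀ ε : Fin 5 → Bool, ∃ n : Fin 13, fc ε ∈ homCopy 5 μ (u n) := by
    intro ε
    have := hu (fc_mem ε)
    rwa [Set.mem_iUnion] at this
  choose Tc hTc using hc
  have hTvinj : Function.Injective Tv := by
    intro p q hpq
    by_contra hne
    have hd := homCopy_dist (le_of_lt hμ0) (hTv p) (hpq ▸ hTv q)
    have := vert_dist (i := p.1) (b := p.2) (i' := q.1) (b' := q.2)
      (by simpa [Prod.ext_iff] using hne)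
    linarith
  set I : Finset (Fin 13) := Finset.image Tv Finset.univ with hI
  have hcardI : I.card = 10 := by
    rw [hI, Finset.card_image_of_injective _ hTvinj]
    simp
  set R : Finset (Fin 13) := Finset.univ \ I with hR
  have hcardR : R.card = 3 := by
    rw [hR, Finset.card_sdiff_of_subset (Finset.subset_univ I), hcardI]
    simp
  have hTcR : ∀ ε : Fin 5 → Bool, Tc ε ∈ R := by
    intro ε
    rw [hR, Finset.mem_sdiff]
    refine ⟨Finset.mem_univ _, ?_⟩
    intro hmem
    obtain ⟨p, -, hp⟩ := Finset.mem_image.mp hmem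
    have hd := homCopy_dist (le_of_lt hμ0) (hp ▸ hTv p) (hTc ε)
    have := vert_fc_dist p.1 p.2 ε
    linarith
  have hfiber : ∀ r ∈ R, (Finset.univ.filter (fun ε : Fin 5 → Bool => Tc ε = r)).card ≤ 10 := by
    intro r _
    apply anticode
    intro a ha b hb hab
    have hra : Tc a = r := (Finset.mem_filter.mp ha).2
    have hrb : Tc b = r := (Finset.mem_filter.mp hb).2
    by_contra hham
    have hd := homCopy_dist (le_of_lt hμ0) (hTc a) ((hra.trans hrb.symm) ▸ hTc b)
    have := fc_dist (ε := a) (ε' := b) (by omega)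
    linarith
  have hcount := Finset.card_eq_sum_card_fiberwise
    (f := Tc) (s := (Finset.univ : Finset (Fin 5 → Bool))) (t := R)
    (fun ε _ => hTcR ε)
  have h32 : (Finset.univ : Finset (Fin 5 → Bool)).card = 32 := by
    simp
  have hle : ∑ r ∈ R, (Finset.univ.filter (fun ε : Fin 5 → Bool => Tc ε = r)).card
      ≤ ∑ _r ∈ R, 10 := Finset.sum_le_sum hfiber
  rw [Finset.sum_const, hcardR, smul_eq_mul] at hle
  omega

end Stmt14

theorem stmt_14 :
    Covers 5 13 (4 / 5) ∧
    ∀ μ : ℝ, 0 < μ → μ < 4 / 5 → ¬ Covers 5 13 μ :=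
  ⟨Stmt14.covers_ub, Stmt14.covers_lb⟩
end

section
/- For every integer d ≥ 4, with λ = (2d−3)/(2d−1), the d-dimensional crosspolytope K^d is covered by the following 2d + 4 translates of λK^d: λK^d ± (2/(2d−1))e_i for i = 1,…,d, together with λK^d + (±1.5/(2d−1), ±1.5/(2d−1), 0, …, 0) for all four sign choices in the first two coordinates. Consequently γ_{2d+4}^d(K^d) ≤ (2d−3)/(2d−1) for all d ≥ 4. -/
open scoped BigOperators

lemma main_subset (d : ℕ) (hd : 4 ≤ d)
    (lam : ℝ) (hlam : lam = (2 * (d : ℝ) - 3) / (2 * (d : ℝ) - 1)) :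
    cross d ⊆
      (⋃ i : Fin d, homCopy d lam ((2 / (2 * (d : ℝ) - 1)) • (Pi.single i 1 : Fin d → ℝ))) ∪
      (⋃ i : Fin d, homCopy d lam (-((2 / (2 * (d : ℝ) - 1)) • (Pi.single i 1 : Fin d → ℝ)))) ∪
      (⋃ s ∈ ({-1, 1} : Set ℝ), ⋃ t ∈ ({-1, 1} : Set ℝ),
        homCopy d lam (fun j =>
          if j = (⟨0, by linarith⟩ : Fin d) then s * (1.5 / (2 * (d : ℝ) - 1))
          else if j = (⟨1, by linarith⟩ : Fin d) then t * (1.5 / (2 * (d : ℝ) - 1))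
          else 0)) := by
  have hd4 : (4:ℝ) ≤ (d:ℝ) := by exact_mod_cast hd
  intro x hx
  have hS : ∑ i, |x i| ≤ 1 := hx
  set D := 2 * (d:ℝ) - 1 with hDdef
  have hD : (0:ℝ) < D := by simp only [hDdef]; linarith
  have hlam' : lam = 1 - 2 / D := by
    rw [hlam]; rw [hDdef]
    have hDne : (2 * (d:ℝ) - 1) ≠ 0 := ne_of_gt (by linarith)
    rw [div_eq_iff hDne, sub_mul, div_mul_cancel₀ _ hDne]; ring
  have hlampos : 0 < lam := by
    rw [hlam']
    have : 2 / D ≤ 2 / 7 := by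
      apply div_le_div_of_nonneg_left (by norm_num) (by norm_num)
      simp only [hDdef]; linarith
    linarith
  set S := ∑ i, |x i| with hSdef
  set δ := 2 / D with hδdef
  set μ := (1.5:ℝ) / D with hμdef
  set c := (S - 1) / 2 + δ with hcdef
  by_cases hA : ∃ i, c ≤ |x i|
  · obtain ⟨i, hi⟩ := hA
    have hsum1 : ∀ v : ℝ, ∑ j, |x j - v * (Pi.single i 1 : Fin d → ℝ) j|
        = (S - |x i|) + |x i - v| := by
      intro v
      rw [← Finset.sum_erase_add _ _ (Finset.mem_univ i)]
      congr 1
      · rw [← Finset.sum_erase_eq_sub (Finset.mem_univ i)]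
        refine Finset.sum_congr rfl fun j hj => ?_
        rw [Pi.single_apply, if_neg (Finset.ne_of_mem_erase hj), mul_zero, sub_zero]
      · rw [Pi.single_apply, if_pos rfl, mul_one]
    have hixle : |x i| ≤ S := Finset.single_le_sum (f := fun j => |x j|)
      (fun j _ => abs_nonneg _) (Finset.mem_univ i)
    by_cases hxi : 0 ≤ x i
    · apply Set.mem_union_left; apply Set.mem_union_left
      refine Set.mem_iUnion.2 ⟨i, ?_⟩
      rw [mem_homCopy hlampos]
      have heq : ∑ j, |x j - (δ • (Pi.single i 1 : Fin d → ℝ)) j|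
          = (S - |x i|) + |x i - δ| := by
        simpa [smul_eq_mul] using hsum1 δ
      rw [heq, hlam', abs_of_nonneg hxi]
      rcases le_or_gt δ (x i) with h | h
      · rw [abs_of_nonneg (by linarith)]; linarith
      · rw [abs_of_neg (by linarith)]
        have : (S - 1) / 2 + δ ≤ x i := by rw [← abs_of_nonneg hxi]; exact hi
        linarith
    · apply Set.mem_union_left; apply Set.mem_union_right
      refine Set.mem_iUnion.2 ⟨i, ?_⟩
      rw [mem_homCopy hlampos]
      push_neg at hxi
      have heq : ∑ j, |x j - (-(δ • (Pi.single i 1 : Fin d → ℝ))) j|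
          = (S - |x i|) + |x i - (-δ)| := by
        simpa [smul_eq_mul] using hsum1 (-δ)
      rw [heq, hlam', abs_of_neg hxi]
      have hi' : (S - 1) / 2 + δ ≤ -x i := by rw [← abs_of_neg hxi]; exact hi
      rcases le_or_gt (x i + δ) 0 with h | h
      · rw [show x i - -δ = x i + δ by ring, abs_of_nonpos h]; linarith
      · rw [show x i - -δ = x i + δ by ring, abs_of_pos h]; linarith
  · push_neg at hA
    have h0d : 0 < d := by omega
    have h1d : 1 < d := by omega
    set i0 : Fin d := ⟨0, h0d⟩ with hi0def
    set i1 : Fin d := ⟨1, h1d⟩ with hi1def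
    have hne : i0 ≠ i1 := by simp [hi0def, hi1def, Fin.ext_iff]
    set s := if 0 ≤ x i0 then (1:ℝ) else -1 with hsdef
    set t := if 0 ≤ x i1 then (1:ℝ) else -1 with htdef
    apply Set.mem_union_right
    have hs_mem : s ∈ ({-1, 1} : Set ℝ) := by
      by_cases h : 0 ≤ x i0 <;> simp [hsdef, h]
    have ht_mem : t ∈ ({-1, 1} : Set ℝ) := by
      by_cases h : 0 ≤ x i1 <;> simp [htdef, h]
    refine Set.mem_biUnion hs_mem (Set.mem_biUnion ht_mem ?_)
    rw [mem_homCopy hlampos]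
    have hsplit : ∀ f : Fin d → ℝ,
        ∑ j, f j = (∑ j ∈ Finset.univ \ {i0, i1}, f j) + (f i0 + f i1) := by
      intro f
      rw [← Finset.sum_sdiff (Finset.subset_univ {i0, i1}), Finset.sum_pair hne]
    rw [hsplit]
    have hF0 : (if i0 = i0 then s * μ else if i0 = i1 then t * μ else 0) = s * μ :=
      if_pos rfl
    have hF1 : (if i1 = i0 then s * μ else if i1 = i1 then t * μ else 0) = t * μ := by
      rw [if_neg (Ne.symm hne), if_pos rfl]
    have hRabs : ∀ j ∈ Finset.univ \ ({i0, i1} : Finset (Fin d)),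
        |x j - (fun j => if j = (⟨0, by linarith⟩ : Fin d) then s * μ
          else if j = (⟨1, by linarith⟩ : Fin d) then t * μ else 0) j| = |x j| := by
      intro j hj
      rw [Finset.mem_sdiff] at hj
      simp only [Finset.mem_insert, Finset.mem_singleton, not_or] at hj
      obtain ⟨-, hj0, hj1⟩ := hj
      have e0 : ¬ (j = (⟨0, by linarith⟩ : Fin d)) := hj0
      have e1 : ¬ (j = (⟨1, by linarith⟩ : Fin d)) := hj1
      simp only [e0, e1, if_false, sub_zero]
    rw [Finset.sum_congr rfl hRabs, hF0, hF1]
    set a0 := |x i0| with ha0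
    set a1 := |x i1| with ha1
    set R := ∑ j ∈ Finset.univ \ ({i0, i1} : Finset (Fin d)), |x j| with hRdef
    have hRS : R + (a0 + a1) = S := by
      rw [ha0, ha1, hRdef, hSdef]; exact (hsplit fun j => |x j|).symm
    have hRc : R ≤ ((d:ℝ) - 2) * c := by
      have hcard : (Finset.univ \ ({i0, i1} : Finset (Fin d))).card = d - 2 := by
        rw [Finset.card_sdiff_of_subset (Finset.subset_univ _), Finset.card_pair hne,
          Finset.card_univ, Fintype.card_fin]
      calc R ≤ (Finset.univ \ ({i0, i1} : Finset (Fin d))).card • c :=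
            Finset.sum_le_card_nsmul _ _ _ (fun j _ => (hA j).le)
        _ = ((d:ℝ) - 2) * c := by
            rw [hcard, nsmul_eq_mul, Nat.cast_sub (by omega : 2 ≤ d)]
            norm_num
    have h0' : |x i0 - s * μ| = |a0 - μ| := by
      by_cases h : 0 ≤ x i0
      · rw [hsdef, if_pos h, one_mul, ha0, abs_of_nonneg h]
      · push_neg at h
        rw [hsdef, if_neg (not_le.2 h), ha0, abs_of_neg h,
          show x i0 - (-1) * μ = -((-x i0) - μ) by ring, abs_neg]
    have h1' : |x i1 - t * μ| = |a1 - μ| := by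
      by_cases h : 0 ≤ x i1
      · rw [htdef, if_pos h, one_mul, ha1, abs_of_nonneg h]
      · push_neg at h
        rw [htdef, if_neg (not_le.2 h), ha1, abs_of_neg h,
          show x i1 - (-1) * μ = -((-x i1) - μ) by ring, abs_neg]
    rw [h0', h1', hlam']
    have ha0n : 0 ≤ a0 := abs_nonneg _
    have ha1n : 0 ≤ a1 := abs_nonneg _
    have ha0c : a0 < c := hA i0
    have ha1c : a1 < c := hA i1
    -- cleared-denominator facts
    have e1 : (2 * (d:ℝ) - 1) * δ = 2 := by
      rw [hδdef, hDdef]; field_simp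
      exact div_self (ne_of_gt (by linarith))
    have e2 : (2 * (d:ℝ) - 3) * δ + 2 * μ ≤ 2 := by
      rw [hδdef, hμdef]
      rw [show (2 * (d:ℝ) - 3) * (2 / D) + 2 * (1.5 / D) = (4 * d - 3) / D by
        field_simp; ring]
      rw [div_le_iff₀ hD, hDdef]; linarith
    have e3 : δ ≤ 2 * μ := by
      have h : 2 * μ - δ = 1 / D := by rw [hδdef, hμdef]; ring
      have h2 := one_div_pos.mpr hD
      linarith
    have hint1 : 0 ≤ ((d:ℝ) - 3) * (1 - S) := by
      apply mul_nonneg <;> linarith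
    have hint2 : 0 ≤ ((d:ℝ) - 2) * (1 - S) := by
      apply mul_nonneg <;> linarith
    rw [hcdef] at hRc ha0c ha1c
    clear hRabs hF0 hF1 h0' h1' hsplit hA hx hRdef ha0 ha1 hsdef htdef hs_mem ht_mem hlam hlam' hcdef hSdef
    clear s t lam hlampos
    clear_value D S δ μ c R a0 a1
    clear c x hδdef hμdef hDdef
    rcases le_total a0 μ with h | h <;> rcases le_total a1 μ with h' | h'
    · rw [abs_of_nonpos (by linarith), abs_of_nonpos (by linarith)]
      linarith [hRc, hRS, hS, hint1, e2, ha0c, ha1c, ha0n, ha1n]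
    · rw [abs_of_nonpos (by linarith), abs_of_nonneg (by linarith)]
      linarith [hRc, hRS, hS, hint2, e1, ha0c, ha1c, ha0n, ha1n]
    · rw [abs_of_nonneg (by linarith), abs_of_nonpos (by linarith)]
      linarith [hRc, hRS, hS, hint2, e1, ha0c, ha1c, ha0n, ha1n]
    · rw [abs_of_nonneg (by linarith), abs_of_nonneg (by linarith)]
      linarith [hS, e3, hD, hRS]


theorem stmt_15 (d : ℕ) (hd : 4 ≤ d)
    (lam : ℝ) (hlam : lam = (2 * (d : ℝ) - 3) / (2 * (d : ℝ) - 1)) :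
    (cross d ⊆
      (⋃ i : Fin d, homCopy d lam ((2 / (2 * (d : ℝ) - 1)) • (Pi.single i 1 : Fin d → ℝ))) ∪
      (⋃ i : Fin d, homCopy d lam (-((2 / (2 * (d : ℝ) - 1)) • (Pi.single i 1 : Fin d → ℝ)))) ∪
      (⋃ s ∈ ({-1, 1} : Set ℝ), ⋃ t ∈ ({-1, 1} : Set ℝ),
        homCopy d lam (fun j =>
          if j = (⟨0, by omega⟩ : Fin d) then s * (1.5 / (2 * (d : ℝ) - 1))
          else if j = (⟨1, by omega⟩ : Fin d) then t * (1.5 / (2 * (d : ℝ) - 1))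
          else 0))) ∧
    Covers d (2 * d + 4) ((2 * (d : ℝ) - 3) / (2 * (d : ℝ) - 1)) := by
  subst hlam
  refine ⟨main_subset d hd _ rfl, ?_⟩
  refine ⟨fun k =>
    if h : (k : ℕ) < d then
      (2 / (2 * (d : ℝ) - 1)) • (Pi.single (⟨(k : ℕ), h⟩ : Fin d) 1 : Fin d → ℝ)
    else if h2 : (k : ℕ) < 2 * d then
      -((2 / (2 * (d : ℝ) - 1)) • (Pi.single (⟨(k : ℕ) - d, by omega⟩ : Fin d) 1 : Fin d → ℝ))
    else (fun j =>
      if j = (⟨0, by omega⟩ : Fin d) then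
        (if (k : ℕ) = 2 * d ∨ (k : ℕ) = 2 * d + 2 then (1:ℝ) else -1) * (1.5 / (2 * (d : ℝ) - 1))
      else if j = (⟨1, by omega⟩ : Fin d) then
        (if (k : ℕ) = 2 * d ∨ (k : ℕ) = 2 * d + 1 then (1:ℝ) else -1) * (1.5 / (2 * (d : ℝ) - 1))
      else 0), ?_⟩
  intro x hx
  rcases main_subset d hd _ rfl hx with (h | h) | h
  · rcases Set.mem_iUnion.1 h with ⟨i, hi⟩
    refine Set.mem_iUnion.2 ⟨⟨(i : ℕ), by omega⟩, ?_⟩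
    simp only [Fin.val_mk]
    rw [dif_pos i.isLt]
    exact hi
  · rcases Set.mem_iUnion.1 h with ⟨i, hi⟩
    refine Set.mem_iUnion.2 ⟨⟨d + (i : ℕ), by have := i.isLt; omega⟩, ?_⟩
    simp only [Fin.val_mk]
    rw [dif_neg (by omega : ¬ d + (i:ℕ) < d),
      dif_pos (show d + (i:ℕ) < 2 * d by have := i.isLt; omega)]
    have he : (⟨d + (i:ℕ) - d, by have := i.isLt; omega⟩ : Fin d) = i := Fin.ext (by simp only [Fin.val_mk]; omega)
    rw [he]
    exact hi
  · simp only [Set.mem_iUnion] at h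
    obtain ⟨s, hs, t, ht, hmem⟩ := h
    simp only [Set.mem_insert_iff, Set.mem_singleton_iff] at hs ht
    have key : ∀ m : ℕ, ¬ m < d → ¬ m < 2 * d →
        (((m : ℕ) = 2 * d ∨ (m : ℕ) = 2 * d + 2 → s = 1) ∧
          (¬((m : ℕ) = 2 * d ∨ (m : ℕ) = 2 * d + 2) → s = -1)) →
        (((m : ℕ) = 2 * d ∨ (m : ℕ) = 2 * d + 1 → t = 1) ∧
          (¬((m : ℕ) = 2 * d ∨ (m : ℕ) = 2 * d + 1) → t = -1)) →
        ∀ hm : m < 2 * d + 4,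
        x ∈ homCopy d ((2 * (d : ℝ) - 3) / (2 * (d : ℝ) - 1))
          ((fun k : Fin (2*d+4) =>
            if h : (k : ℕ) < d then
              (2 / (2 * (d : ℝ) - 1)) • (Pi.single (⟨(k : ℕ), h⟩ : Fin d) 1 : Fin d → ℝ)
            else if h2 : (k : ℕ) < 2 * d then
              -((2 / (2 * (d : ℝ) - 1)) • (Pi.single (⟨(k : ℕ) - d, by omega⟩ : Fin d) 1 : Fin d → ℝ))
            else (fun j =>
              if j = (⟨0, by omega⟩ : Fin d) then
                (if (k : ℕ) = 2 * d ∨ (k : ℕ) = 2 * d + 2 then (1:ℝ) else -1) * (1.5 / (2 * (d : ℝ) - 1))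
              else if j = (⟨1, by omega⟩ : Fin d) then
                (if (k : ℕ) = 2 * d ∨ (k : ℕ) = 2 * d + 1 then (1:ℝ) else -1) * (1.5 / (2 * (d : ℝ) - 1))
              else 0)) ⟨m, hm⟩) := by
      intro m hm1 hm2 hsm htm hm
      simp only [Fin.val_mk]
      rw [dif_neg hm1, dif_neg hm2]
      by_cases c1 : (m : ℕ) = 2 * d ∨ (m : ℕ) = 2 * d + 2 <;>
        by_cases c2 : (m : ℕ) = 2 * d ∨ (m : ℕ) = 2 * d + 1
      · simp only [if_pos c1, if_pos c2]
        rw [hsm.1 c1, htm.1 c2] at hmem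
        simpa using hmem
      · simp only [if_pos c1, if_neg c2]
        rw [hsm.1 c1, htm.2 c2] at hmem
        simpa using hmem
      · simp only [if_neg c1, if_pos c2]
        rw [hsm.2 c1, htm.1 c2] at hmem
        simpa using hmem
      · simp only [if_neg c1, if_neg c2]
        rw [hsm.2 c1, htm.2 c2] at hmem
        simpa using hmem
    rcases hs with rfl | rfl <;> rcases ht with rfl | rfl
    · -- s = -1, t = -1 : k = 2d+3
      exact Set.mem_iUnion.2 ⟨⟨2*d+3, by omega⟩,
        key (2*d+3) (by omega) (by omega)
          ⟨fun h => by omega, fun _ => rfl⟩ ⟨fun h => by omega, fun _ => rfl⟩ (by omega)⟩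
    · -- s = -1, t = 1 : k = 2d+1
      exact Set.mem_iUnion.2 ⟨⟨2*d+1, by omega⟩,
        key (2*d+1) (by omega) (by omega)
          ⟨fun h => by omega, fun _ => rfl⟩ ⟨fun h => rfl, fun h => by omega⟩ (by omega)⟩
    · -- s = 1, t = -1 : k = 2d+2
      exact Set.mem_iUnion.2 ⟨⟨2*d+2, by omega⟩,
        key (2*d+2) (by omega) (by omega)
          ⟨fun h => rfl, fun h => by omega⟩ ⟨fun h => by omega, fun _ => rfl⟩ (by omega)⟩
    · -- s = 1, t = 1 : k = 2d
      exact Set.mem_iUnion.2 ⟨⟨2*d, by omega⟩,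
        key (2*d) (by omega) (by omega)
          ⟨fun h => rfl, fun h => by omega⟩ ⟨fun h => rfl, fun h => by omega⟩ (by omega)⟩
end

section
/- The four points (1/7, 2/7, 2/7, 2/7), (2/7, −2/7, 1/7, −2/7), (−2/7, −2/7, −1/7, 2/7) and (−1/7, 2/7, −2/7, −2/7) in K^4 have pairwise ℓ¹-distance exactly 10/7; consequently, for any μ < 5/7, no two of these four points lie in a common translate of μK^4, so they cannot be covered by fewer than four translates of μK^4. -/
open scoped BigOperators

noncomputable def p₁ : Fin 4 → ℝ := ![1/7, 2/7, 2/7, 2/7]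
noncomputable def p₂ : Fin 4 → ℝ := ![2/7, -2/7, 1/7, -2/7]
noncomputable def p₃ : Fin 4 → ℝ := ![-2/7, -2/7, -1/7, 2/7]
noncomputable def p₄ : Fin 4 → ℝ := ![-1/7, 2/7, -2/7, -2/7]

lemma dist_le_of_homCopy (μ : ℝ) (hμ : 0 ≤ μ) (u p q : Fin 4 → ℝ)
    (hp : p ∈ homCopy 4 μ u) (hq : q ∈ homCopy 4 μ u) :
    (∑ i, |p i - q i|) ≤ 2 * μ := by
  obtain ⟨x, hx, rfl⟩ := hp
  obtain ⟨y, hy, rfl⟩ := hq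
  have key : ∀ i : Fin 4, |(μ • x + u) i - (μ • y + u) i| = μ * |x i - y i| := by
    intro i
    have : (μ • x + u) i - (μ • y + u) i = μ * (x i - y i) := by
      simp only [Pi.add_apply, Pi.smul_apply, smul_eq_mul]; ring
    rw [this, abs_mul, abs_of_nonneg hμ]
  calc (∑ i, |(μ • x + u) i - (μ • y + u) i|) = ∑ i, μ * |x i - y i| := by
        exact Finset.sum_congr rfl fun i _ => key i
    _ = μ * ∑ i, |x i - y i| := by rw [Finset.mul_sum]
    _ ≤ μ * ∑ i, (|x i| + |y i|) := by
        apply mul_le_mul_of_nonneg_left _ hμ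
        exact Finset.sum_le_sum fun i _ => abs_sub (x i) (y i)
    _ = μ * ((∑ i, |x i|) + ∑ i, |y i|) := by rw [Finset.sum_add_distrib]
    _ ≤ μ * (1 + 1) := by
        apply mul_le_mul_of_nonneg_left _ hμ
        exact add_le_add hx hy
    _ = 2 * μ := by ring

lemma p_ne : ∀ j k : Fin 4, j ≠ k → ![p₁, p₂, p₃, p₄] j ≠ ![p₁, p₂, p₃, p₄] k := by
  intro j k hjk h
  fin_cases j <;> fin_cases k <;> simp_all <;>
    · have := congrFun h 0
      norm_num [p₁, p₂, p₃, p₄] at this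

theorem stmt_17 (S : Set (Fin 4 → ℝ)) (hS : S = {p₁, p₂, p₃, p₄}) :
    (S ⊆ cross 4) ∧
    (∀ p ∈ S, ∀ q ∈ S, p ≠ q → (∑ i, |p i - q i|) = 10 / 7) ∧
    ∀ μ : ℝ, 0 < μ → μ < 5 / 7 →
      (∀ p ∈ S, ∀ q ∈ S, p ≠ q → ∀ u : Fin 4 → ℝ,
        ¬ (p ∈ homCopy 4 μ u ∧ q ∈ homCopy 4 μ u)) ∧
      (∀ m : ℕ, m < 4 →
        ¬ ∃ u : Fin m → (Fin 4 → ℝ), S ⊆ ⋃ i, homCopy 4 μ (u i)) := by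
  subst hS
  have hsub : ({p₁, p₂, p₃, p₄} : Set (Fin 4 → ℝ)) ⊆ cross 4 := by
    intro x hx
    rcases hx with rfl | rfl | rfl | rfl <;>
      · simp only [cross, Set.mem_setOf_eq]
        norm_num [Fin.sum_univ_four, p₁, p₂, p₃, p₄, abs_of_pos, abs_of_neg] <;>
          simp [Matrix.cons_val] <;> norm_num [abs_of_pos, abs_of_neg]
  have hdist : ∀ p ∈ ({p₁, p₂, p₃, p₄} : Set (Fin 4 → ℝ)), ∀ q ∈ ({p₁, p₂, p₃, p₄} : Set (Fin 4 → ℝ)),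
      p ≠ q → (∑ i, |p i - q i|) = 10 / 7 := by
    intro p hp q hq hpq
    rcases hp with rfl | rfl | rfl | rfl <;> rcases hq with rfl | rfl | rfl | rfl <;>
      first
        | exact absurd rfl hpq
        | (norm_num [Fin.sum_univ_four, p₁, p₂, p₃, p₄, abs_of_nonneg, abs_of_nonpos] <;>
            simp [Matrix.cons_val] <;> norm_num [abs_of_nonneg, abs_of_nonpos])
  refine ⟨hsub, hdist, ?_⟩
  intro μ hμ0 hμ
  have hsep : ∀ p ∈ ({p₁, p₂, p₃, p₄} : Set (Fin 4 → ℝ)), ∀ q ∈ ({p₁, p₂, p₃, p₄} : Set (Fin 4 → ℝ)),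
      p ≠ q → ∀ u : Fin 4 → ℝ, ¬ (p ∈ homCopy 4 μ u ∧ q ∈ homCopy 4 μ u) := by
    intro p hp q hq hpq u ⟨hpu, hqu⟩
    have h1 := dist_le_of_homCopy μ hμ0.le u p q hpu hqu
    have h2 := hdist p hp q hq hpq
    rw [h2] at h1
    linarith
  refine ⟨hsep, ?_⟩
  intro m hm ⟨u, hcov⟩
  have hmem : ∀ j : Fin 4, ![p₁, p₂, p₃, p₄] j ∈ ({p₁, p₂, p₃, p₄} : Set (Fin 4 → ℝ)) := by
    intro j; fin_cases j <;> simp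
  have hex : ∀ j : Fin 4, ∃ i : Fin m, ![p₁, p₂, p₃, p₄] j ∈ homCopy 4 μ (u i) := by
    intro j
    have := hcov (hmem j)
    simpa using this
  choose f hf using hex
  have hcard : Fintype.card (Fin m) < Fintype.card (Fin 4) := by simpa using hm
  obtain ⟨j, k, hjk, hfjk⟩ := Fintype.exists_ne_map_eq_of_card_lt f hcard
  exact hsep _ (hmem j) _ (hmem k) (p_ne j k hjk) (u (f j)) ⟨hf j, hfjk ▸ hf k⟩
end
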